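/- arXiv:1803.05164 — 12 statements merged into one kernel-verified Lean document; each statement's English description precedes it below -/
import Mathlib

section
/- The Hankel determinant det(a_{i+j})_{i,j=0}^{n-1} equals (-1)^(n choose 2) for all n ≥ 1. -/
/-!
Let `2 ^ m < n ≤ 2 ^ (m + 1)` and write `n = s + 2 r` with `s + r = 2 ^ m`. On the indices
`[2 ^ m, 2 n - 1)` the sequence vanishes except at `2 ^ (m + 1) - 1`. Hence, splitting the Hankel
matrix of size `n` after its first `s` indices, the lower-right block `D` (again Hankel, of size
`2 r`) is zero below its anti-diagonal and one on it, so `det D = (-1) ^ (2 r choose 2)`; and the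
upper-right block is `X * D` for a matrix `X` with `X * C = 0`, `C` the lower-left block. A row
operation then makes the matrix block triangular, so `det H_n = (-1) ^ (2 r choose 2) * det H_s`,
and induction on `n` finishes, as `(s + 2 r choose 2) ≡ (s choose 2) + (2 r choose 2) mod 2`.
-/

open Classical in
noncomputable def catMod2 (n : ℕ) : ℤ := if ∃ k : ℕ, n + 1 = 2 ^ k then 1 else 0

theorem Nat.choose_two_add (a b : ℕ) :
    (a + b).choose 2 = a.choose 2 + a * b + b.choose 2 := by
  rw [Nat.add_choose_eq, Finset.Nat.sum_antidiagonal_succ, Finset.Nat.sum_antidiagonal_succ,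
    Finset.Nat.antidiagonal_zero, Finset.sum_singleton]
  simp only [Nat.choose_zero_right, Nat.choose_one_right, zero_add, one_mul, mul_one]
  ring

namespace Matrix

section Hankel

variable {R : Type*}

def hankel (a : ℕ → R) (n : ℕ) : Matrix (Fin n) (Fin n) R :=
  of fun i j => a (i + j)

theorem hankel_add_submatrix_finSumFinEquiv (a : ℕ → R) (s n : ℕ) :
    (hankel a (s + n)).submatrix finSumFinEquiv finSumFinEquiv =
      fromBlocks (hankel a s) (of fun (i : Fin s) (j : Fin n) => a (i + (s + j)))
        (of fun (i : Fin n) (j : Fin s) => a (s + i + j))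
        (of fun i j : Fin n => a (s + i + (s + j))) := by
  ext (i | i) (j | j) <;> simp [hankel]

end Hankel

variable {R : Type*} [CommRing R]

theorem det_eq_prod_rev_of_antitriangular {n : ℕ} (M : Matrix (Fin n) (Fin n) R)
    (h : ∀ i j : Fin n, n ≤ i + j → M i j = 0) :
    M.det = (-1) ^ n.choose 2 * ∏ i, M i i.rev := by
  induction n with
  | zero => simp
  | succ n ih =>
    rw [det_succ_column M (Fin.last n), Fintype.sum_eq_single 0]
    · rw [ih]
      · simp only [Fin.prod_univ_succ, Fin.rev_zero, Fin.rev_succ, Fin.succAbove_zero,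
          Fin.succAbove_last, submatrix_apply, Fin.val_zero, Fin.val_last, zero_add,
          Nat.choose_succ_succ', Nat.choose_one_right, pow_add]
        ring
      · intro i j hij
        simp only [Fin.succAbove_zero, Fin.succAbove_last, submatrix_apply]
        exact h _ _ (by simp; omega)
    · intro i hi
      have : (i : ℕ) ≠ 0 := Fin.val_ne_zero_iff.mpr hi
      rw [h i (Fin.last n) (by rw [Fin.val_last]; omega), mul_zero, zero_mul]

theorem det_fromBlocks_of_mul_eq {l m : Type*} [Fintype l] [DecidableEq l] [Fintype m]
    [DecidableEq m] {A : Matrix l l R} {B : Matrix l m R} {C : Matrix m l R} {D : Matrix m m R}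
    (X : Matrix l m R) (hB : X * D = B) (hC : X * C = 0) :
    (fromBlocks A B C D).det = A.det * D.det := by
  have : fromBlocks A B C D = fromBlocks 1 X 0 1 * fromBlocks A 0 C D := by
    simp [fromBlocks_multiply, hB, hC]
  rw [this, det_mul, det_fromBlocks_zero₂₁, det_fromBlocks_zero₁₂]
  simp

theorem det_hankel_add_two_mul (a : ℕ → R) (s r : ℕ) (h_one : a (2 * (s + r) - 1) = 1)
    (h_zero : ∀ t, s + r ≤ t → t + 1 < 2 * (s + 2 * r) → t + 1 ≠ 2 * (s + r) → a t = 0) :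
    (hankel a (s + 2 * r)).det = (-1) ^ (2 * r).choose 2 * (hankel a s).det := by
  have hX : ∀ (i : Fin s) (k : Fin (2 * r)), (k : ℕ) < r → a (s + i + (2 * r - 1 - k)) = 0 :=
    fun i k hk => h_zero _ (by omega) (by omega) (by omega)
  rw [← det_submatrix_equiv_self finSumFinEquiv, hankel_add_submatrix_finSumFinEquiv,
    -- `X` is the upper-right block with its columns reversed.
    det_fromBlocks_of_mul_eq (of fun (i : Fin s) (k : Fin (2 * r)) => a (s + i + (2 * r - 1 - k)))]
  · rw [mul_comm, det_eq_prod_rev_of_antitriangular]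
    · rw [Finset.prod_eq_one, mul_one]
      intro k _
      simp only [of_apply, Fin.val_rev]
      convert h_one using 2
      omega
    · intro k j hkj
      exact h_zero _ (by omega) (by omega) (by omega)
  · ext i j
    rw [mul_apply, Fintype.sum_eq_single (⟨2 * r - 1 - j, by omega⟩ : Fin (2 * r))]
    · simp only [of_apply]
      rw [show s + (2 * r - 1 - j) + (s + j) = 2 * (s + r) - 1 by omega, h_one, mul_one]
      congr 1
      omega
    · intro k hk
      have hk' : (k : ℕ) ≠ 2 * r - 1 - j := fun h => hk (Fin.ext h)
      rcases lt_or_ge (k : ℕ) r with hkr | hkr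
      · simp [hX i k hkr]
      · simp only [of_apply]
        rw [h_zero (s + k + (s + j)) (by omega) (by omega) (by omega), mul_zero]
  · ext i i'
    rw [mul_apply, zero_apply]
    refine Finset.sum_eq_zero fun k _ => ?_
    rcases lt_or_ge (k : ℕ) r with hk | hk
    · simp [hX i k hk]
    · simp only [of_apply]
      rw [h_zero (s + k + i') (by omega) (by omega) (by omega), mul_zero]

end Matrix

theorem catMod2_eq_one {t k : ℕ} (h : t + 1 = 2 ^ k) : catMod2 t = 1 := by
  rw [catMod2, if_pos ⟨k, h⟩]

theorem catMod2_eq_zero {t m : ℕ} (h_lo : 2 ^ m < t + 1) (h_hi : t + 1 < 2 ^ (m + 2))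
    (h_ne : t + 1 ≠ 2 ^ (m + 1)) : catMod2 t = 0 := by
  rw [catMod2, if_neg]
  rintro ⟨k, hk⟩
  rw [hk, Nat.pow_lt_pow_iff_right (by norm_num)] at h_lo h_hi
  exact h_ne (by rw [hk, show k = m + 1 by omega])

theorem Nat.exists_eq_add_two_mul_two_pow {n : ℕ} (hn : 2 ≤ n) :
    ∃ s r m, n = s + 2 * r ∧ 0 < r ∧ s + r = 2 ^ m := by
  have h_le := Nat.pow_log_le_self 2 (show n - 1 ≠ 0 by omega)
  have h_lt := Nat.lt_pow_succ_log_self (b := 2) (by norm_num) (n - 1)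
  rw [pow_succ] at h_lt
  exact ⟨2 * 2 ^ Nat.log 2 (n - 1) - n, n - 2 ^ Nat.log 2 (n - 1), Nat.log 2 (n - 1),
    by omega, by omega, by omega⟩

theorem stmt0_general (n : ℕ) :
    Matrix.det (Matrix.of fun i j : Fin n => catMod2 ((i : ℕ) + j)) =
      (-1 : ℤ) ^ (n.choose 2) := by
  induction n using Nat.strong_induction_on with
  | _ n ih =>
  rcases lt_or_ge n 2 with hn | hn
  · interval_cases n
    · simp
    · simp [Matrix.det_unique, catMod2_eq_one (k := 0) rfl]
  obtain ⟨s, r, m, rfl, hr, hp⟩ := Nat.exists_eq_add_two_mul_two_pow hn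
  have h_one : catMod2 (2 * (s + r) - 1) = 1 := catMod2_eq_one (k := m + 1) (by rw [hp]; omega)
  have h_zero t (h_lo : s + r ≤ t) (h_hi : t + 1 < 2 * (s + 2 * r))
      (h_ne : t + 1 ≠ 2 * (s + r)) : catMod2 t = 0 := by
    have h2 : 2 ^ (m + 1) = 2 * (s + r) := by rw [pow_succ, hp]; ring
    have h4 : 2 ^ (m + 2) = 4 * (s + r) := by rw [pow_add, hp]; ring
    exact catMod2_eq_zero (m := m) (by omega) (by omega) (by omega)
  calc (Matrix.hankel catMod2 (s + 2 * r)).det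
      = (-1) ^ (2 * r).choose 2 * (Matrix.hankel catMod2 s).det :=
        Matrix.det_hankel_add_two_mul catMod2 s r h_one h_zero
    _ = (-1) ^ (2 * r).choose 2 * (-1) ^ s.choose 2 := by rw [Matrix.hankel, ih s (by omega)]
    _ = (-1) ^ (s + 2 * r).choose 2 := by
        rw [Nat.choose_two_add, pow_add, pow_add, ((even_two_mul r).mul_left s).neg_one_pow]
        ring

theorem stmt0 (n : ℕ) (hn : 1 ≤ n) :
    Matrix.det (Matrix.of fun i j : Fin n => catMod2 ((i : ℕ) + j)) =
      (-1 : ℤ) ^ (n.choose 2) :=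
  stmt0_general n
end

section
/- The Catalan number C_n = (1/(n+1))·binomial(2n,n) is odd if and only if n+1 is a power of 2. -/
/-!
Write `s₂(m)` for the binary digit sum of `m`. Kummer's theorem gives `v₂(binom(2n, n)) = s₂(n)`
(adding `n` to itself produces `s₂(n)` carries), and Legendre's formula for `(n+1)!` and `n!` gives
`v₂(n + 1) = s₂(n) + 1 - s₂(n + 1)`. Since `(n + 1) C_n = binom(2n, n)`, it follows that
`v₂(C_n) = s₂(n + 1) - 1`, which vanishes exactly when `n + 1` has a single binary digit `1`.
-/

open Nat

theorem Nat.sum_digits_eq_zero_iff {b m : ℕ} : (b.digits m).sum = 0 ↔ m = 0 := by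
  refine ⟨fun h => ?_, fun h => by simp [h]⟩
  by_contra hm
  have hmem := List.getLast_mem (digits_ne_nil_iff_ne_zero (b := b).mpr hm)
  exact getLast_digit_ne_zero b hm (List.sum_eq_zero_iff.mp h _ hmem)

theorem Nat.sum_digits_base_mul {b : ℕ} (hb : 1 < b) (m : ℕ) :
    (b.digits (b * m)).sum = (b.digits m).sum := by
  rcases m.eq_zero_or_pos with rfl | hm
  · simp
  · simp [digits_base_mul hb hm]

theorem Nat.sum_digits_base_pow {b : ℕ} (hb : 1 < b) (k : ℕ) : (b.digits (b ^ k)).sum = 1 := by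
  induction k with
  | zero => simp [digits_of_lt b 1 one_ne_zero hb]
  | succ k ih => rw [pow_succ', sum_digits_base_mul hb, ih]

theorem Nat.sum_digits_eq_one_iff {b : ℕ} (hb : 1 < b) (m : ℕ) :
    (b.digits m).sum = 1 ↔ ∃ k, m = b ^ k := by
  refine ⟨fun h => ?_, fun ⟨k, hk⟩ => hk ▸ sum_digits_base_pow hb k⟩
  induction m using Nat.strong_induction_on with
  | _ m ih =>
    have hm : m ≠ 0 := by rintro rfl; simp at h
    rw [digits_eq_cons_digits_div hb hm, List.sum_cons] at h
    have hdiv : m = b * (m / b) + m % b := (div_add_mod m b).symm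
    rcases Nat.eq_zero_or_pos (m % b) with hmod | hmod
    · obtain ⟨k, hk⟩ := ih (m / b) (div_lt_self (by omega) hb) (by omega)
      exact ⟨k + 1, by rw [hdiv, hmod, hk, pow_succ]; ring⟩
    · have hq : m / b = 0 := sum_digits_eq_zero_iff (b := b).mp (by omega)
      rw [hq, digits_zero, List.sum_nil] at h
      rw [hq, mul_zero] at hdiv
      exact ⟨0, by rw [pow_zero]; omega⟩

theorem sub_one_mul_padicValNat_succ_add_sum_digits {p : ℕ} [Fact p.Prime] (n : ℕ) :
    (p - 1) * padicValNat p (n + 1) + (p.digits (n + 1)).sum = (p.digits n).sum + 1 := by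
  have legendre := sub_one_mul_padicValNat_factorial (p := p) (n + 1)
  rw [factorial_succ, padicValNat.mul n.add_one_ne_zero (factorial_ne_zero n), mul_add,
    sub_one_mul_padicValNat_factorial] at legendre
  have := digit_sum_le p n
  have := digit_sum_le p (n + 1)
  omega

theorem padicValNat_two_centralBinom (n : ℕ) :
    padicValNat 2 n.centralBinom = (digits 2 n).sum := by
  have kummer := sub_one_mul_padicValNat_choose_eq_sub_sum_digits' (p := 2) (k := n) (n := n)
  rw [← two_mul, sum_digits_base_mul one_lt_two] at kummer
  simpa [centralBinom, two_mul] using kummer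

theorem catalan_ne_zero (n : ℕ) : catalan n ≠ 0 :=
  right_ne_zero_of_mul <| succ_mul_catalan_eq_centralBinom n ▸ centralBinom_ne_zero n

theorem padicValNat_two_catalan_add_one (n : ℕ) :
    padicValNat 2 (catalan n) + 1 = (digits 2 (n + 1)).sum := by
  have hval := padicValNat_two_centralBinom n
  rw [← succ_mul_catalan_eq_centralBinom, padicValNat.mul n.add_one_ne_zero (catalan_ne_zero n)]
    at hval
  have hsucc := sub_one_mul_padicValNat_succ_add_sum_digits (p := 2) n
  rw [Nat.add_one_sub_one, one_mul] at hsucc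
  omega

theorem stmt1 (n : ℕ) : Odd (catalan n) ↔ ∃ k : ℕ, n + 1 = 2 ^ k := by
  rw [← sum_digits_eq_one_iff one_lt_two, ← padicValNat_two_catalan_add_one,
    Nat.add_eq_right, padicValNat.eq_zero_iff]
  simp [catalan_ne_zero, ← Nat.not_even_iff_odd, even_iff_two_dvd]
end

section
/- For each n ≥ 1 there exists a unique permutation π of {0,1,...,n-1} such that for every i, the number i + π(i) + 1 is a power of 2. -/
def Nimble {n : ℕ} (π : Equiv.Perm (Fin n)) : Prop :=
  ∀ i : Fin n, ∃ k : ℕ, (i : ℕ) + (π i : ℕ) + 1 = 2 ^ k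

lemma nimble_symm {n : ℕ} (π : Equiv.Perm (Fin n)) (h : Nimble π) : Nimble π.symm := by
  intro j
  obtain ⟨k, hk⟩ := h (π.symm j)
  rw [Equiv.apply_symm_apply] at hk
  exact ⟨k, by omega⟩

lemma partA {n K : ℕ} (hn2 : n ≤ 2 ^ (K + 1)) (π : Equiv.Perm (Fin n)) (hπ : Nimble π)
    (i : Fin n) (hi : 2 ^ K ≤ (i : ℕ) ∨ 2 ^ K ≤ (π i : ℕ)) :
    (i : ℕ) + (π i : ℕ) + 1 = 2 ^ (K + 1) := by
  obtain ⟨t, ht⟩ := hπ i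
  have h1 : 2 ^ K < 2 ^ t := by omega
  have h2 : 2 ^ t < 2 ^ (K + 2) := by
    have hi1 := i.2
    have hi2 := (π i).2
    have he : 2 ^ (K + 2) = 2 * 2 ^ (K + 1) := by ring
    omega
  have hK : K < t := (Nat.pow_lt_pow_iff_right (by norm_num)).mp h1
  have hK2 : t < K + 2 := (Nat.pow_lt_pow_iff_right (by norm_num)).mp h2
  have ht2 : t = K + 1 := by omega
  subst ht2
  exact ht

lemma partB {n K : ℕ} (hn1 : 2 ^ K < n) (hn2 : n ≤ 2 ^ (K + 1)) (π : Equiv.Perm (Fin n))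
    (hπ : Nimble π) (i : Fin n) (hi : 2 ^ (K + 1) - n ≤ (i : ℕ)) :
    (i : ℕ) + (π i : ℕ) + 1 = 2 ^ (K + 1) := by
  by_cases hc : 2 ^ K ≤ (i : ℕ)
  · exact partA hn2 π hπ i (Or.inl hc)
  · push_neg at hc
    have hpow : 2 ^ (K + 1) = 2 * 2 ^ K := by ring
    have hv2 : 2 ^ (K + 1) - 1 - (i : ℕ) < n := by omega
    set j : Fin n := ⟨2 ^ (K + 1) - 1 - (i : ℕ), hv2⟩ with hj
    have ha := partA hn2 π hπ (π.symm j) (Or.inr (by rw [Equiv.apply_symm_apply]; simp [hj]; omega))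
    rw [Equiv.apply_symm_apply] at ha
    have hjv : (j : ℕ) = 2 ^ (K + 1) - 1 - (i : ℕ) := rfl
    have hsi : π.symm j = i := by
      apply Fin.ext
      omega
    have : π i = j := by rw [← hsi, Equiv.apply_symm_apply]
    rw [this]
    omega

lemma low_lt {n K : ℕ} (hn1 : 2 ^ K < n) (hn2 : n ≤ 2 ^ (K + 1)) (π : Equiv.Perm (Fin n))
    (hπ : Nimble π) (i : Fin n) (hi : (i : ℕ) < 2 ^ (K + 1) - n) : (π i : ℕ) < 2 ^ (K + 1) - n := by
  by_contra hc
  push_neg at hc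
  have hb := partB hn1 hn2 π.symm (nimble_symm π hπ) (π i) hc
  rw [Equiv.symm_apply_apply] at hb
  have := (π i).2
  omega

lemma key : ∀ n : ℕ, ∃! π : Equiv.Perm (Fin n), Nimble π := by
  intro n
  induction n using Nat.strong_induction_on with
  | _ n IH =>
  by_cases hsmall : n ≤ 1
  · haveI : Subsingleton (Fin n) := ⟨fun a b => Fin.ext (by omega)⟩
    refine ⟨Equiv.refl _, fun i => ⟨0, ?_⟩, fun y _ => Equiv.ext fun x => Subsingleton.elim _ _⟩
    have := i.2
    simp
    omega
  · push_neg at hsmall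
    set K := Nat.log 2 (n - 1) with hKdef
    have hK1 : 2 ^ K ≤ n - 1 := Nat.pow_log_le_self 2 (by omega)
    have hK2 : n - 1 < 2 ^ (K + 1) := Nat.lt_pow_succ_log_self (by norm_num) _
    have hn1 : 2 ^ K < n := by omega
    have hn2 : n ≤ 2 ^ (K + 1) := by omega
    have hpow : 2 ^ (K + 1) = 2 * 2 ^ K := by ring
    set m := 2 ^ (K + 1) - n with hmdef
    have hmn : m < n := by omega
    obtain ⟨σ, hσ, hσu⟩ := IH m hmn
    -- restriction of a nimble perm to Fin m
    have restr : ∀ π : Equiv.Perm (Fin n), Nimble π →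
        ∃ τ : Equiv.Perm (Fin m), ∀ x : Fin m,
          (τ x : ℕ) = (π ⟨(x : ℕ), lt_trans x.2 hmn⟩ : ℕ) := by
      intro π hπ
      set g : Fin m → Fin m := fun x =>
        ⟨(π ⟨(x : ℕ), lt_trans x.2 hmn⟩ : ℕ), low_lt hn1 hn2 π hπ _ x.2⟩ with hg
      have ginj : Function.Injective g := by
        intro a b hab
        rw [hg] at hab
        simp only [Fin.mk.injEq] at hab
        have h2 := π.injective (Fin.ext hab)
        have h3 : (a : ℕ) = (b : ℕ) := by simpa using h2
        exact Fin.ext h3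
      exact ⟨Equiv.ofBijective g (Finite.injective_iff_bijective.mp ginj), fun x => rfl⟩
    -- any two nimble perms are equal
    have agree : ∀ π₁ π₂ : Equiv.Perm (Fin n), Nimble π₁ → Nimble π₂ → π₁ = π₂ := by
      intro π₁ π₂ h₁ h₂
      obtain ⟨τ₁, hτ₁⟩ := restr π₁ h₁
      obtain ⟨τ₂, hτ₂⟩ := restr π₂ h₂
      have hτ₁n : Nimble τ₁ := by
        intro x
        obtain ⟨k, hk⟩ := h₁ ⟨(x : ℕ), lt_trans x.2 hmn⟩
        exact ⟨k, by rw [hτ₁ x]; exact hk⟩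
      have hτ₂n : Nimble τ₂ := by
        intro x
        obtain ⟨k, hk⟩ := h₂ ⟨(x : ℕ), lt_trans x.2 hmn⟩
        exact ⟨k, by rw [hτ₂ x]; exact hk⟩
      have hteq : τ₁ = τ₂ := by rw [hσu τ₁ hτ₁n, hσu τ₂ hτ₂n]
      apply Equiv.ext
      intro i
      by_cases h : (i : ℕ) < m
      · have e1 : (π₁ i : ℕ) = (τ₁ ⟨(i : ℕ), h⟩ : ℕ) := by rw [hτ₁]
        have e2 : (π₂ i : ℕ) = (τ₂ ⟨(i : ℕ), h⟩ : ℕ) := by rw [hτ₂]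
        apply Fin.ext
        rw [e1, e2, hteq]
      · push_neg at h
        have b1 := partB hn1 hn2 π₁ h₁ i h
        have b2 := partB hn1 hn2 π₂ h₂ i h
        apply Fin.ext
        omega
    -- existence
    set f : Fin n → Fin n := fun i =>
      if h : (i : ℕ) < m then ⟨(σ ⟨(i : ℕ), h⟩ : ℕ), lt_trans (σ ⟨(i : ℕ), h⟩).2 hmn⟩
      else ⟨2 ^ (K + 1) - 1 - (i : ℕ), by have := i.2; omega⟩ with hf
    have finj : Function.Injective f := by
      intro a b hab
      have ha2 := a.2
      have hb2 := b.2
      by_cases ha : (a : ℕ) < m <;> by_cases hb : (b : ℕ) < m <;>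
        simp only [hf, ha, hb, dif_pos, dif_neg, not_false_iff, dite_true, dite_false] at hab <;>
        have hv := congrArg Fin.val hab
      · simp only at hv
        have : σ ⟨(a : ℕ), ha⟩ = σ ⟨(b : ℕ), hb⟩ := Fin.ext hv
        have h3 := σ.injective this
        have h4 : (a : ℕ) = (b : ℕ) := by simpa using h3
        exact Fin.ext h4
      · exfalso
        have := (σ ⟨(a : ℕ), ha⟩).2
        simp only at hv
        omega
      · exfalso
        have := (σ ⟨(b : ℕ), hb⟩).2
        simp only at hv
        omega
      · simp only at hv
        exact Fin.ext (by omega)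
    set π : Equiv.Perm (Fin n) := Equiv.ofBijective f (Finite.injective_iff_bijective.mp finj)
      with hπdef
    have hπap : ∀ i, π i = f i := fun i => rfl
    have hπn : Nimble π := by
      intro i
      rw [hπap]
      by_cases h : (i : ℕ) < m
      · obtain ⟨k, hk⟩ := hσ ⟨(i : ℕ), h⟩
        refine ⟨k, ?_⟩
        simp only [hf, h, dite_true]
        exact hk
      · refine ⟨K + 1, ?_⟩
        simp only [hf, h, dite_false]
        have := i.2
        omega
    exact ⟨π, hπn, fun π' h' => agree π' π h' hπn⟩

theorem stmt2 (n : ℕ) (hn : 1 ≤ n) :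
    ∃! π : Equiv.Perm (Fin n), ∀ i : Fin n, ∃ k : ℕ, (i : ℕ) + (π i : ℕ) + 1 = 2 ^ k :=
  key n
end

section
/- For k ≥ 1 and 0 ≤ n < 2^k, D(2^k + n) = (-1)^n · D(2^k - 1 - n). -/
open Classical in
noncomputable def A (n : ℕ) : ℤ := if ∃ k : ℕ, n + 2 = 2 ^ (k + 1) then 1 else 0

noncomputable def D (n : ℕ) : ℤ :=
  Matrix.det (Matrix.of fun i j : Fin n => A ((i : ℕ) + j))

lemma A_of_eq {t k : ℕ} (h : t + 2 = 2 ^ (k + 1)) : A t = 1 := by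
  unfold A
  rw [if_pos ⟨k, h⟩]

lemma A_of_ne {t : ℕ} (h : ∀ j, t + 2 ≠ 2 ^ (j + 1)) : A t = 0 := by
  unfold A
  rw [if_neg]
  rintro ⟨j, hj⟩
  exact h j hj

/-- In the range `[2^k - 1, 4·2^k - 4]`, the only `1` of `A` is at `2·2^k - 2`. -/
lemma A_high {k t : ℕ} (hk : 1 ≤ k) (h1 : 2 ^ k - 1 ≤ t) (h2 : t ≤ 4 * 2 ^ k - 4) :
    A t = if t = 2 * 2 ^ k - 2 then 1 else 0 := by
  have hN : 2 ≤ 2 ^ k := by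
    calc 2 = 2 ^ 1 := rfl
    _ ≤ 2 ^ k := Nat.pow_le_pow_right (by norm_num) hk
  by_cases h : t = 2 * 2 ^ k - 2
  · rw [if_pos h]
    refine A_of_eq (k := k) ?_
    rw [pow_succ]
    omega
  · rw [if_neg h]
    apply A_of_ne
    intro j hj
    have e1 : 2 ^ (j + 1) = 2 * 2 ^ j := by rw [pow_succ]; ring
    have e2 : 2 ^ (k + 2) = 4 * 2 ^ k := by rw [pow_add]; ring
    have hlt : 2 ^ k < 2 ^ (j + 1) := by omega
    have hlt2 : 2 ^ (j + 1) < 2 ^ (k + 2) := by omega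
    have l1 : k < j + 1 := (Nat.pow_lt_pow_iff_right (by norm_num)).mp hlt
    have l2 : j + 1 < k + 2 := (Nat.pow_lt_pow_iff_right (by norm_num)).mp hlt2
    have : j = k := by omega
    subst this
    rw [pow_succ] at hj
    omega

/-- Evaluation of a product of pairwise disjoint swaps. -/
lemma prod_swaps_spec {α : Type*} [DecidableEq α] (a b : ℕ → α) (n : ℕ)
    (hd : ∀ i j, i < n → j < n → a i ≠ b j)
    (ha : ∀ i j, i < n → j < n → i ≠ j → a i ≠ a j)
    (hb : ∀ i j, i < n → j < n → i ≠ j → b i ≠ b j) :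
    (∀ j, j < n → (((List.range n).map (fun i => Equiv.swap (a i) (b i))).prod) (a j) = b j ∧
              (((List.range n).map (fun i => Equiv.swap (a i) (b i))).prod) (b j) = a j) ∧
    (∀ c, (∀ i, i < n → c ≠ a i ∧ c ≠ b i) →
      (((List.range n).map (fun i => Equiv.swap (a i) (b i))).prod) c = c) := by
  induction n with
  | zero => simp
  | succ n ih =>
    obtain ⟨ih1, ih2⟩ := ih
      (fun i j hi hj => hd i j (by omega) (by omega))
      (fun i j hi hj => ha i j (by omega) (by omega))
      (fun i j hi hj => hb i j (by omega) (by omega))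
    have hprod : ∀ c : α, (((List.range (n + 1)).map (fun i => Equiv.swap (a i) (b i))).prod) c =
        (((List.range n).map (fun i => Equiv.swap (a i) (b i))).prod) ((Equiv.swap (a n) (b n)) c) := by
      intro c
      rw [List.range_succ, List.map_append, List.prod_append]
      rfl
    constructor
    · intro j hj
      rcases Nat.lt_or_ge j n with hjn | hjn
      · constructor
        · rw [hprod, Equiv.swap_apply_of_ne_of_ne
            (ha j n (by omega) (by omega) (by omega))
            (hd j n (by omega) (by omega))]
          exact (ih1 j hjn).1
        · rw [hprod, Equiv.swap_apply_of_ne_of_ne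
            (fun hc => hd n j (by omega) (by omega) hc.symm)
            (hb j n (by omega) (by omega) (by omega))]
          exact (ih1 j hjn).2
      · have hjn' : j = n := by omega
        subst hjn'
        constructor
        · rw [hprod, Equiv.swap_apply_left]
          exact ih2 (b j) (fun i hi =>
            ⟨fun hc => hd i j (by omega) (by omega) hc.symm,
             fun hc => hb j i (by omega) (by omega) (by omega) hc⟩)
        · rw [hprod, Equiv.swap_apply_right]
          exact ih2 (a j) (fun i hi =>
            ⟨fun hc => ha j i (by omega) (by omega) (by omega) hc,
             fun hc => hd j i (by omega) (by omega) hc⟩)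
    · intro c hc
      rw [hprod, Equiv.swap_apply_of_ne_of_ne (hc n (by omega)).1 (hc n (by omega)).2]
      exact ih2 c (fun i hi => hc i (by omega))

theorem stmt4 (k n : ℕ) (hk : 1 ≤ k) (h : n < 2 ^ k) :
    D (2 ^ k + n) = (-1 : ℤ) ^ n * D (2 ^ k - 1 - n) := by
  have hN : 2 ≤ 2 ^ k := by
    calc 2 = 2 ^ 1 := rfl
    _ ≤ 2 ^ k := Nat.pow_le_pow_right (by norm_num) hk
  -- the two endpoints of the swaps
  have hale : ∀ i, 2 ^ k - 1 - n + min i n < 2 ^ k + n := by intro i; omega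
  have hble : ∀ i, 2 ^ k - 1 + n - min i n < 2 ^ k + n := by intro i; omega
  set a : ℕ → Fin (2 ^ k + n) := fun i => ⟨2 ^ k - 1 - n + min i n, hale i⟩ with ha_def
  set b : ℕ → Fin (2 ^ k + n) := fun i => ⟨2 ^ k - 1 + n - min i n, hble i⟩ with hb_def
  have haval : ∀ i, i < n → (a i : ℕ) = 2 ^ k - 1 - n + i := by
    intro i hi; simp [ha_def, Nat.min_eq_left (by omega : i ≤ n)]
  have hbval : ∀ i, i < n → (b i : ℕ) = 2 ^ k - 1 + n - i := by
    intro i hi; simp [hb_def, Nat.min_eq_left (by omega : i ≤ n)]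
  have hd : ∀ i j, i < n → j < n → a i ≠ b j := by
    intro i j hi hj hne
    have := congrArg (Fin.val) hne
    rw [haval i hi, hbval j hj] at this
    omega
  have haa : ∀ i j, i < n → j < n → i ≠ j → a i ≠ a j := by
    intro i j hi hj hij hne
    have := congrArg (Fin.val) hne
    rw [haval i hi, haval j hj] at this
    omega
  have hbb : ∀ i j, i < n → j < n → i ≠ j → b i ≠ b j := by
    intro i j hi hj hij hne
    have := congrArg (Fin.val) hne
    rw [hbval i hi, hbval j hj] at this
    omega
  set τ : Equiv.Perm (Fin (2 ^ k + n)) :=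
    (((List.range n).map (fun i => Equiv.swap (a i) (b i))).prod) with hτ_def
  obtain ⟨hs1, hs2⟩ := prod_swaps_spec a b n hd haa hbb
  -- closed form for τ
  have htau : ∀ c : Fin (2 ^ k + n),
      (τ c : ℕ) = if 2 ^ k - 1 - n ≤ (c : ℕ) then 2 * 2 ^ k - 2 - (c : ℕ) else (c : ℕ) := by
    intro c
    rcases Nat.lt_or_ge (c : ℕ) (2 ^ k - 1 - n) with hc | hc
    · rw [if_neg (by omega)]
      have : τ c = c := by
        apply hs2
        intro i hi
        constructor
        · intro he; have := congrArg Fin.val he; rw [haval i hi] at this; omega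
        · intro he; have := congrArg Fin.val he; rw [hbval i hi] at this; omega
      rw [this]
    · rw [if_pos hc]
      have hcle : (c : ℕ) < 2 ^ k + n := c.isLt
      rcases Nat.lt_or_ge (c : ℕ) (2 ^ k - 1) with hc2 | hc2
      · -- c = a (c - (2^k-1-n)), note n ≥ 1 here
        have hn1 : 1 ≤ n := by omega
        have hii : (c : ℕ) - (2 ^ k - 1 - n) < n := by omega
        have hca : c = a ((c : ℕ) - (2 ^ k - 1 - n)) := by
          apply Fin.ext; rw [haval _ hii]; omega
        rw [hca, (hs1 _ hii).1, hbval _ hii]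
        omega
      rcases Nat.lt_or_ge (c : ℕ) (2 ^ k) with hc3 | hc3
      · -- c = 2^k - 1, fixed point
        have : τ c = c := by
          apply hs2
          intro i hi
          constructor
          · intro he; have := congrArg Fin.val he; rw [haval i hi] at this; omega
          · intro he; have := congrArg Fin.val he; rw [hbval i hi] at this; omega
        rw [this]; omega
      · -- c = b (2^k - 1 + n - c)
        have hii : 2 ^ k - 1 + n - (c : ℕ) < n := by omega
        have hcb : c = b (2 ^ k - 1 + n - (c : ℕ)) := by
          apply Fin.ext; rw [hbval _ hii]; omega
        rw [hcb, (hs1 _ hii).2, haval _ hii]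
        omega
  -- sign of τ
  have hsign : (Equiv.Perm.sign τ : ℤ) = (-1 : ℤ) ^ n := by
    rw [hτ_def, map_list_prod]
    have hmap : ((List.range n).map (fun i => Equiv.swap (a i) (b i))).map
        (Equiv.Perm.sign) = List.replicate n (-1) := by
      have hmem : ∀ x ∈ ((List.range n).map (fun i => Equiv.swap (a i) (b i))).map
          (Equiv.Perm.sign), x = -1 := by
        intro x hx
        simp only [List.map_map, List.mem_map, List.mem_range, Function.comp] at hx
        obtain ⟨i, hi, rfl⟩ := hx
        exact Equiv.Perm.sign_swap (hd i i hi hi)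
      have h2 := List.eq_replicate_of_mem hmem
      simpa using h2
    rw [hmap, List.prod_replicate]
    push_cast
    ring
  -- Now the determinant computation.
  unfold D
  set M : Matrix (Fin (2 ^ k + n)) (Fin (2 ^ k + n)) ℤ :=
    Matrix.of (fun i j : Fin (2 ^ k + n) => A ((i : ℕ) + (j : ℕ))) with hM_def
  have hsq : (-1 : ℤ) ^ n * (-1 : ℤ) ^ n = 1 := by
    rw [← pow_add]
    exact Even.neg_one_pow ⟨n, rfl⟩
  have hperm := Matrix.det_permute' τ M
  have hdetM : M.det = (-1 : ℤ) ^ n * (M.submatrix id ⇑τ).det := by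
    rw [hperm, Int.cast_id, hsign, ← mul_assoc, hsq, one_mul]
  -- first block reduction
  have he1 : (2 ^ k - 1) + (n + 1) = 2 ^ k + n := by omega
  set e1 : Fin (2 ^ k - 1) ⊕ Fin (n + 1) ≃ Fin (2 ^ k + n) :=
    finSumFinEquiv.trans (finCongr he1) with he1_def
  have he1l : ∀ i : Fin (2 ^ k - 1), (e1 (Sum.inl i) : ℕ) = (i : ℕ) := by
    intro i; simp [he1_def]
  have he1r : ∀ j : Fin (n + 1), (e1 (Sum.inr j) : ℕ) = 2 ^ k - 1 + (j : ℕ) := by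
    intro j; simp [he1_def]
  set M1 : Matrix (Fin (2 ^ k - 1) ⊕ Fin (n + 1)) (Fin (2 ^ k - 1) ⊕ Fin (n + 1)) ℤ :=
    (M.submatrix id ⇑τ).submatrix e1 e1 with hM1_def
  have hdet1 : (M.submatrix id ⇑τ).det = M1.det :=
    (Matrix.det_submatrix_equiv_self e1 _).symm
  have h21 : M1.toBlocks₂₁ = 0 := by
    ext i j
    have hi := i.isLt
    have hj := j.isLt
    show A ((e1 (Sum.inr i) : ℕ) + (τ (e1 (Sum.inl j)) : ℕ)) = 0
    rw [htau (e1 (Sum.inl j)), he1l j, he1r i]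
    rcases Nat.lt_or_ge (j : ℕ) (2 ^ k - 1 - n) with hjr | hjr
    · rw [if_neg (by omega), A_high hk (by omega) (by omega), if_neg (by omega)]
    · rw [if_pos (by omega), A_high hk (by omega) (by omega), if_neg (by omega)]
  have h22 : M1.toBlocks₂₂ = 1 := by
    ext i j
    have hi := i.isLt
    have hj := j.isLt
    rw [Matrix.one_apply]
    show A ((e1 (Sum.inr i) : ℕ) + (τ (e1 (Sum.inr j)) : ℕ)) = if i = j then 1 else 0
    rw [htau (e1 (Sum.inr j)), he1r i, he1r j,
      if_pos (by omega), A_high hk (by omega) (by omega)]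
    rcases eq_or_ne i j with rfl | hij
    · rw [if_pos (by omega), if_pos rfl]
    · have hvij : (i : ℕ) ≠ (j : ℕ) := fun hv => hij (Fin.ext hv)
      rw [if_neg (by omega), if_neg hij]
  have hM1det : M1.det = M1.toBlocks₁₁.det := by
    conv_lhs => rw [← Matrix.fromBlocks_toBlocks M1]
    rw [h21, h22, Matrix.det_fromBlocks_zero₂₁, Matrix.det_one, mul_one]
  -- second block reduction
  have he2 : (2 ^ k - 1 - n) + n = 2 ^ k - 1 := by omega
  set e2 : Fin (2 ^ k - 1 - n) ⊕ Fin n ≃ Fin (2 ^ k - 1) :=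
    finSumFinEquiv.trans (finCongr he2) with he2_def
  have he2l : ∀ i : Fin (2 ^ k - 1 - n), (e2 (Sum.inl i) : ℕ) = (i : ℕ) := by
    intro i; simp [he2_def]
  have he2r : ∀ j : Fin n, (e2 (Sum.inr j) : ℕ) = 2 ^ k - 1 - n + (j : ℕ) := by
    intro j; simp [he2_def]
  set P2 : Matrix (Fin (2 ^ k - 1 - n) ⊕ Fin n) (Fin (2 ^ k - 1 - n) ⊕ Fin n) ℤ :=
    (M1.toBlocks₁₁).submatrix e2 e2 with hP2_def
  have hdet2 : M1.toBlocks₁₁.det = P2.det :=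
    (Matrix.det_submatrix_equiv_self e2 _).symm
  have h12 : P2.toBlocks₁₂ = 0 := by
    ext i j
    have hi := i.isLt
    have hj := j.isLt
    show A ((e1 (Sum.inl (e2 (Sum.inl i))) : ℕ) + (τ (e1 (Sum.inl (e2 (Sum.inr j)))) : ℕ)) = 0
    rw [htau, he1l, he1l, he2l i, he2r j,
      if_pos (by omega), A_high hk (by omega) (by omega), if_neg (by omega)]
  have h22' : P2.toBlocks₂₂ = 1 := by
    ext i j
    have hi := i.isLt
    have hj := j.isLt
    rw [Matrix.one_apply]
    show A ((e1 (Sum.inl (e2 (Sum.inr i))) : ℕ) + (τ (e1 (Sum.inl (e2 (Sum.inr j)))) : ℕ))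
      = if i = j then 1 else 0
    rw [htau, he1l, he1l, he2r i, he2r j,
      if_pos (by omega), A_high hk (by omega) (by omega)]
    rcases eq_or_ne i j with rfl | hij
    · rw [if_pos (by omega), if_pos rfl]
    · have hvij : (i : ℕ) ≠ (j : ℕ) := fun hv => hij (Fin.ext hv)
      rw [if_neg (by omega), if_neg hij]
  have hP2det : P2.det = P2.toBlocks₁₁.det := by
    conv_lhs => rw [← Matrix.fromBlocks_toBlocks P2]
    rw [h12, h22', Matrix.det_fromBlocks_zero₁₂, Matrix.det_one, mul_one]
  have hQ : P2.toBlocks₁₁ =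
      Matrix.of (fun i j : Fin (2 ^ k - 1 - n) => A ((i : ℕ) + (j : ℕ))) := by
    ext i j
    have hi := i.isLt
    have hj := j.isLt
    show A ((e1 (Sum.inl (e2 (Sum.inl i))) : ℕ) + (τ (e1 (Sum.inl (e2 (Sum.inl j)))) : ℕ))
      = A ((i : ℕ) + (j : ℕ))
    rw [htau, he1l, he1l, he2l i, he2l j, if_neg (by omega)]
  rw [hdetM, hdet1, hM1det, hdet2, hP2det, hQ]
end

section
/- For k ≥ 1: D(2^{k+1} + n) = -D(n) for 0 ≤ n < 2^k, and D(2^{k+1} + n) = D(n) for 2^k ≤ n < 2^{k+1}. -/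
section swaps
variable {N : ℕ}

def pp (a b : ℕ → Fin N) : ℕ → Equiv.Perm (Fin N)
  | 0 => 1
  | t+1 => pp a b t * Equiv.swap (a t) (b t)

variable (a b : ℕ → Fin N)

lemma pp_fix (t : ℕ) (x : Fin N) (hx : ∀ s, s < t → x ≠ a s ∧ x ≠ b s) :
    pp a b t x = x := by
  induction t with
  | zero => simp [pp]
  | succ t ih =>
      rw [pp, Equiv.Perm.mul_apply,
        Equiv.swap_apply_of_ne_of_ne (hx t (by omega)).1 (hx t (by omega)).2]
      exact ih (fun s hs => hx s (by omega))

lemma pp_a (t : ℕ) (hd : ∀ s u, s < t → u < t → (a s).val < (b u).val)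
    (ha : ∀ s u, s < t → u < t → s ≠ u → a s ≠ a u)
    (hb : ∀ s u, s < t → u < t → s ≠ u → b s ≠ b u) :
    ∀ u, u < t → pp a b t (a u) = b u := by
  induction t with
  | zero => intro u hu; omega
  | succ t ih =>
      intro u hu
      rw [pp, Equiv.Perm.mul_apply]
      rcases eq_or_lt_of_le (Nat.lt_succ_iff.mp hu) with h | h
      · subst h
        rw [Equiv.swap_apply_left]
        exact pp_fix a b u _ (fun s hs =>
          ⟨Fin.ne_of_val_ne (by have := hd s u (by omega) (by omega); omega),
           hb u s (by omega) (by omega) (by omega)⟩)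
      · rw [Equiv.swap_apply_of_ne_of_ne (ha u t (by omega) (by omega) (by omega))
          (Fin.ne_of_val_ne (Nat.ne_of_lt (hd u t (by omega) (by omega))))]
        exact ih (fun s u hs hu => hd s u (by omega) (by omega))
          (fun s u hs hu => ha s u (by omega) (by omega))
          (fun s u hs hu => hb s u (by omega) (by omega)) u h

lemma pp_b (t : ℕ) (hd : ∀ s u, s < t → u < t → (a s).val < (b u).val)
    (ha : ∀ s u, s < t → u < t → s ≠ u → a s ≠ a u)
    (hb : ∀ s u, s < t → u < t → s ≠ u → b s ≠ b u) :
    ∀ u, u < t → pp a b t (b u) = a u := by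
  induction t with
  | zero => intro u hu; omega
  | succ t ih =>
      intro u hu
      rw [pp, Equiv.Perm.mul_apply]
      rcases eq_or_lt_of_le (Nat.lt_succ_iff.mp hu) with h | h
      · subst h
        rw [Equiv.swap_apply_right]
        exact pp_fix a b u _ (fun s hs =>
          ⟨ha u s (by omega) (by omega) (by omega),
           Fin.ne_of_val_ne (by have := hd u s (by omega) (by omega); omega)⟩)
      · rw [Equiv.swap_apply_of_ne_of_ne
          (Fin.ne_of_val_ne (by have := hd t u (by omega) (by omega); omega))
          (hb u t (by omega) (by omega) (by omega))]
        exact ih (fun s u hs hu => hd s u (by omega) (by omega))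
          (fun s u hs hu => ha s u (by omega) (by omega))
          (fun s u hs hu => hb s u (by omega) (by omega)) u h

lemma pp_sign (t : ℕ) (hab : ∀ s, s < t → a s ≠ b s) :
    Equiv.Perm.sign (pp a b t) = (-1) ^ t := by
  induction t with
  | zero => simp [pp]
  | succ t ih =>
      rw [pp, map_mul, ih (fun s hs => hab s (by omega)),
        Equiv.Perm.sign_swap (hab t (by omega)), pow_succ]

end swaps

lemma A_one (t x : ℕ) (h : x + 2 = 2 ^ (t + 1)) : A x = 1 := by
  unfold A; rw [if_pos ⟨t, h⟩]

lemma A_zero (t x : ℕ) (h1 : 2 ^ (t + 1) < x + 2) (h2 : x + 2 < 2 ^ (t + 3))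
    (h3 : x + 2 ≠ 2 ^ (t + 2)) : A x = 0 := by
  unfold A; rw [if_neg]
  rintro ⟨u, hu⟩
  rw [hu] at h1 h2 h3
  have h4 : t + 1 < u + 1 := (Nat.pow_lt_pow_iff_right (by norm_num)).mp h1
  have h5 : u + 1 < t + 3 := (Nat.pow_lt_pow_iff_right (by norm_num)).mp h2
  have : u + 1 = t + 2 := by omega
  rw [this] at h3; exact h3 rfl

lemma key_s5 (t K n : ℕ) (hm : 2 ^ (t + 1) = K + n + 1) :
    D (2 ^ (t + 1) + n) = (-1) ^ n * D K := by
  have hp2 : 2 ^ (t + 2) = 2 * (K + n + 1) := by rw [pow_succ, hm]; ring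
  have hp3 : 2 ^ (t + 3) = 4 * (K + n + 1) := by
    rw [pow_succ, pow_succ, hm]; ring
  have hNN : 2 ^ (t + 1) + n = K + n + (n + 1) := by omega
  rw [hNN]
  set M : Matrix (Fin (K + n + (n + 1))) (Fin (K + n + (n + 1))) ℤ :=
    Matrix.of fun i j => A ((i : ℕ) + j) with hM
  -- the column permutation
  set a : ℕ → Fin (K + n + (n + 1)) :=
    fun s => if h : s < n then ⟨K + s, by omega⟩ else ⟨0, by omega⟩ with haa
  set b : ℕ → Fin (K + n + (n + 1)) :=
    fun s => if h : s < n then ⟨K + n + (n - s), by omega⟩ else ⟨0, by omega⟩ with hbb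
  have hav : ∀ s, s < n → (a s).val = K + s := fun s hs => by simp [haa, dif_pos hs]
  have hbv : ∀ s, s < n → (b s).val = K + n + (n - s) := fun s hs => by simp [hbb, dif_pos hs]
  have hd : ∀ s u, s < n → u < n → (a s).val < (b u).val := fun s u hs hu => by
    rw [hav s hs, hbv u hu]; omega
  have hA : ∀ s u, s < n → u < n → s ≠ u → a s ≠ a u := fun s u hs hu hne =>
    Fin.ne_of_val_ne (by rw [hav s hs, hav u hu]; omega)
  have hB : ∀ s u, s < n → u < n → s ≠ u → b s ≠ b u := fun s u hs hu hne =>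
    Fin.ne_of_val_ne (by rw [hbv s hs, hbv u hu]; omega)
  set τ := pp a b n with hτdef
  have hτ : ∀ x : Fin (K + n + (n + 1)), (τ x).val
      = if x.val < K then x.val else 2 * (K + n) - x.val := by
    intro x
    have hxlt := x.isLt
    rcases lt_or_ge x.val K with h | h
    · rw [if_pos h, hτdef, pp_fix a b n x ?_]
      intro s hs
      exact ⟨Fin.ne_of_val_ne (by rw [hav s hs]; omega),
             Fin.ne_of_val_ne (by rw [hbv s hs]; omega)⟩
    rw [if_neg (by omega)]
    rcases lt_or_ge x.val (K + n) with h2 | h2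
    · have hx : x = a (x.val - K) := Fin.ext (by rw [hav _ (by omega)]; omega)
      conv_lhs => rw [hx]
      rw [hτdef, pp_a a b n hd hA hB _ (by omega), hbv _ (by omega)]
      omega
    rcases eq_or_lt_of_le h2 with h3 | h3
    · rw [hτdef, pp_fix a b n x ?_]
      · omega
      intro s hs
      exact ⟨Fin.ne_of_val_ne (by rw [hav s hs]; omega),
             Fin.ne_of_val_ne (by rw [hbv s hs]; omega)⟩
    · have hx : x = b (K + 2 * n - x.val) := Fin.ext (by rw [hbv _ (by omega)]; omega)
      conv_lhs => rw [hx]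
      rw [hτdef, pp_b a b n hd hA hB _ (by omega), hav _ (by omega)]
      omega
  have hsign : Equiv.Perm.sign τ = (-1) ^ n :=
    pp_sign a b n (fun s hs => Fin.ne_of_val_ne (by rw [hav s hs, hbv s hs]; omega))
  set Msub := M.submatrix id ⇑τ with hMsubdef
  have hperm := Matrix.det_permute' τ M
  rw [hsign] at hperm
  have hperm' : Msub.det = (-1 : ℤ) ^ n * M.det := by
    rw [hMsubdef, hperm]
    simp
  set M1 := Msub.submatrix ⇑(finSumFinEquiv (m := K + n) (n := n + 1))
    ⇑(finSumFinEquiv (m := K + n) (n := n + 1)) with hM1def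
  have hval1 : ∀ i : Fin (K + n),
      ((finSumFinEquiv (Sum.inl i) : Fin (K + n + (n + 1)))).val = i.val := by
    intro i; simp
  have hval2 : ∀ i : Fin (n + 1),
      ((finSumFinEquiv (Sum.inr i) : Fin (K + n + (n + 1)))).val = (K + n) + i.val := by
    intro i; simp
  have hent : ∀ p q : Fin (K + n) ⊕ Fin (n + 1), M1 p q
      = A ((finSumFinEquiv p).val +
          (if (finSumFinEquiv q).val < K then (finSumFinEquiv q).val
           else 2 * (K + n) - (finSumFinEquiv q).val)) := by
    intro p q
    have : M1 p q = A ((finSumFinEquiv p).val + (τ (finSumFinEquiv q)).val) := rfl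
    rw [this, hτ]
  set P : Matrix (Fin (K + n)) (Fin (K + n)) ℤ :=
    Matrix.of fun i j => M1 (Sum.inl i) (Sum.inl j) with hP
  set C : Matrix (Fin (K + n)) (Fin (n + 1)) ℤ :=
    Matrix.of fun i j => M1 (Sum.inl i) (Sum.inr j) with hC
  have hblock : M1 = Matrix.fromBlocks P C 0 1 := by
    ext p q
    rcases p with i | i <;> rcases q with j | j
    · rfl
    · rfl
    · have hi := i.isLt
      have hj := j.isLt
      rw [hent, hval1, hval2]
      simp only [Matrix.fromBlocks_apply₂₁, Matrix.zero_apply]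
      split_ifs with hv
      · exact A_zero t _ (by omega) (by omega) (by omega)
      · exact A_zero t _ (by omega) (by omega) (by omega)
    · have hi := i.isLt
      have hj := j.isLt
      rw [hent, hval2, hval2]
      simp only [Matrix.fromBlocks_apply₂₂, Matrix.one_apply]
      rw [if_neg (by omega)]
      rcases eq_or_ne i j with rfl | hne
      · rw [if_pos rfl]
        exact A_one (t + 1) _ (by omega)
      · rw [if_neg hne]
        have hne' : (i : ℕ) ≠ (j : ℕ) := fun hc => hne (Fin.ext hc)
        exact A_zero t _ (by omega) (by omega) (by omega)
  -- stage 2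
  set P1 := P.submatrix ⇑(finSumFinEquiv (m := K) (n := n))
    ⇑(finSumFinEquiv (m := K) (n := n)) with hP1def
  have hwal1 : ∀ i : Fin K, ((finSumFinEquiv (Sum.inl i) : Fin (K + n))).val = i.val := by
    intro i; simp
  have hwal2 : ∀ i : Fin n, ((finSumFinEquiv (Sum.inr i) : Fin (K + n))).val = K + i.val := by
    intro i; simp
  have hent2 : ∀ p q : Fin K ⊕ Fin n, P1 p q
      = A ((finSumFinEquiv p).val +
          (if (finSumFinEquiv q).val < K then (finSumFinEquiv q).val
           else 2 * (K + n) - (finSumFinEquiv q).val)) := by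
    intro p q
    have h0 : P1 p q = M1 (Sum.inl (finSumFinEquiv p)) (Sum.inl (finSumFinEquiv q)) := rfl
    rw [h0, hent, hval1, hval1]
  set B : Matrix (Fin K) (Fin K) ℤ := Matrix.of fun i j => A ((i : ℕ) + j) with hBdef
  set X : Matrix (Fin n) (Fin K) ℤ :=
    Matrix.of fun i j => P1 (Sum.inr i) (Sum.inl j) with hX
  have hblock2 : P1 = Matrix.fromBlocks B 0 X 1 := by
    ext p q
    rcases p with i | i <;> rcases q with j | j
    · have hj := j.isLt
      rw [hent2, hwal1, hwal1]
      simp only [Matrix.fromBlocks_apply₁₁]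
      rw [if_pos (by omega)]
      rfl
    · have hi := i.isLt
      have hj := j.isLt
      rw [hent2, hwal1, hwal2]
      simp only [Matrix.fromBlocks_apply₁₂, Matrix.zero_apply]
      rw [if_neg (by omega)]
      exact A_zero t _ (by omega) (by omega) (by omega)
    · rfl
    · have hi := i.isLt
      have hj := j.isLt
      rw [hent2, hwal2, hwal2]
      simp only [Matrix.fromBlocks_apply₂₂, Matrix.one_apply]
      rw [if_neg (by omega)]
      rcases eq_or_ne i j with rfl | hne
      · rw [if_pos rfl]
        exact A_one (t + 1) _ (by omega)
      · rw [if_neg hne]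
        have hne' : (i : ℕ) ≠ (j : ℕ) := fun hc => hne (Fin.ext hc)
        exact A_zero t _ (by omega) (by omega) (by omega)
  have hsq : (-1 : ℤ) ^ n * (-1) ^ n = 1 := by
    rw [← pow_add]; exact Even.neg_one_pow ⟨n, rfl⟩
  calc D (K + n + (n + 1)) = M.det := rfl
    _ = (-1 : ℤ) ^ n * Msub.det := by rw [hperm', ← mul_assoc, hsq, one_mul]
    _ = (-1 : ℤ) ^ n * M1.det := by rw [hM1def, Matrix.det_submatrix_equiv_self]
    _ = (-1 : ℤ) ^ n * P.det := by
        rw [hblock, Matrix.det_fromBlocks_zero₂₁, Matrix.det_one, mul_one]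
    _ = (-1 : ℤ) ^ n * P1.det := by rw [hP1def, Matrix.det_submatrix_equiv_self]
    _ = (-1 : ℤ) ^ n * B.det := by
        rw [hblock2, Matrix.det_fromBlocks_zero₁₂, Matrix.det_one, mul_one]
    _ = (-1 : ℤ) ^ n * D K := rfl

theorem stmt5 (k : ℕ) (hk : 1 ≤ k) :
    (∀ n : ℕ, n < 2 ^ k → D (2 ^ (k + 1) + n) = -D n) ∧
    (∀ n : ℕ, 2 ^ k ≤ n → n < 2 ^ (k + 1) → D (2 ^ (k + 1) + n) = D n) := by
  obtain ⟨k', rfl⟩ : ∃ k', k = k' + 1 := ⟨k - 1, by omega⟩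
  have h2k : 2 ^ (k' + 1 + 1) = 2 * 2 ^ (k' + 1) := by rw [pow_succ]; ring
  have h2k' : 2 ^ (k' + 1) = 2 * 2 ^ k' := by rw [pow_succ]; ring
  have hpos : 1 ≤ 2 ^ k' := Nat.one_le_two_pow
  constructor
  · intro n hn
    set K := 2 ^ (k' + 1 + 1) - n - 1 with hKdef
    have hK : 2 ^ (k' + 1 + 1) = K + n + 1 := by omega
    have h1 := key_s5 (k' + 1) K n hK
    set n' := K - 2 ^ (k' + 1) with hn'def
    have hK2 : 2 ^ (k' + 1) = n + n' + 1 := by omega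
    have h2 := key_s5 k' n n' hK2
    have hKn' : K = 2 ^ (k' + 1) + n' := by omega
    rw [hKn', h2] at h1
    rw [h1, ← mul_assoc, ← pow_add]
    have hodd : Odd (n + n') := ⟨2 ^ k' - 1, by omega⟩
    rw [hodd.neg_one_pow, neg_one_mul]
  · intro n hn1 hn2
    set K := 2 ^ (k' + 1 + 1) - n - 1 with hKdef
    have hK : 2 ^ (k' + 1 + 1) = K + n + 1 := by omega
    have h1 := key_s5 (k' + 1) K n hK
    set n'' := n - 2 ^ (k' + 1) with hn''def
    have hK2 : 2 ^ (k' + 1) = K + n'' + 1 := by omega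
    have h2 := key_s5 k' K n''  hK2
    have hn : n = 2 ^ (k' + 1) + n'' := by omega
    rw [← hn] at h2
    rw [h1, h2]
    have heven : Even (2 ^ (k' + 1)) := ⟨2 ^ k', by omega⟩
    rw [show n = n'' + 2 ^ (k' + 1) from by omega, pow_add, heven.neg_one_pow, mul_one]
end

section
/- D(n) = (-1)^{δ(n)}, where δ(n) counts, in the binary expansion n = [ε_k...ε_1 ε_0]_2, the number of indices i ≥ 1 with ε_{i+1}ε_i = 10, plus 1 if ε_1ε_0 = 11. -/
def deltaFn (n : ℕ) : ℕ :=
  ((Finset.Icc 1 n).filter (fun i => n.testBit (i + 1) = true ∧ n.testBit i = false)).card +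
    (if n.testBit 1 = true ∧ n.testBit 0 = true then 1 else 0)

/-!
Index rows and columns from `0`, so that the entry `(i, j)` is nonzero exactly when
`(i + 1) + (j + 1)` is a power of two. Let `2 ^ s` be the least power of two above `n` and
`m = 2 ^ s - 1 - n` the bitwise complement of `n`. A row `i` with `2 (i + 1) ≥ 2 ^ s` can only be
matched with the column `2 ^ s - 2 - i`; this forces every permutation with a nonzero contribution
to reverse the block `[m, n)` and to preserve `[0, m)`, so by induction exactly one permutation
contributes and the determinant is its sign. The block reversal is a product of `n - 2 ^ (s - 1)`
transpositions, and the theorem reduces to `δ(n) ≡ n - 2 ^ (s - 1) + δ(m) (mod 2)`. This holds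
because `δ(n) + δ(m)` counts the changes between consecutive bits of `n` in positions
`1, …, s - 1`, whose number has the parity of `ε₁ + ε_{s-1} = ε₁ + 1`, plus `[ε₁ = ε₀]`.
-/

open Finset Equiv

def bitCompl (n : ℕ) : ℕ := 2 ^ n.size - 1 - n

lemma exists_size_eq_succ {n : ℕ} (hn : n ≠ 0) :
    ∃ s, n.size = s + 1 ∧ 2 ^ s ≤ n ∧ n < 2 * 2 ^ s := by
  obtain ⟨s, hs⟩ := Nat.exists_eq_succ_of_ne_zero (Nat.size_eq_zero.not.mpr hn)
  have hlt := Nat.lt_size_self n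
  rw [hs, pow_succ'] at hlt
  exact ⟨s, hs, Nat.lt_size.mp (by omega), hlt⟩

lemma bitCompl_add_add_one {n : ℕ} (hn : n ≠ 0) : bitCompl n + n + 1 = 2 ^ n.size := by
  obtain ⟨s, hs, -, hlt⟩ := exists_size_eq_succ hn
  rw [bitCompl, hs, pow_succ']
  omega

lemma two_pow_size_le_two_mul {n : ℕ} (hn : n ≠ 0) : 2 ^ n.size ≤ 2 * n := by
  obtain ⟨s, hs, hle, -⟩ := exists_size_eq_succ hn
  rw [hs, pow_succ']
  omega

lemma bitCompl_lt {n : ℕ} (hn : n ≠ 0) : bitCompl n < n := by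
  have := bitCompl_add_add_one hn
  have := two_pow_size_le_two_mul hn
  omega

-- `bitCompl 0 = 0`, so the recursive branch is only reached for `n ≠ 0`
def partner (n i : ℕ) : ℕ :=
  if bitCompl n ≤ i then 2 ^ n.size - 2 - i else partner (bitCompl n) i
termination_by n
decreasing_by exact bitCompl_lt (by rintro rfl; simp [bitCompl] at *)

lemma partner_of_bitCompl_le {n i : ℕ} (h : bitCompl n ≤ i) :
    partner n i = 2 ^ n.size - 2 - i := by
  rw [partner, if_pos h]

lemma partner_of_lt_bitCompl {n i : ℕ} (h : i < bitCompl n) :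
    partner n i = partner (bitCompl n) i := by
  rw [partner, if_neg (by omega)]

lemma partner_lt {n i : ℕ} (hi : i < n) : partner n i < n := by
  induction n using Nat.strong_induction_on generalizing i with
  | _ n ih =>
    have hP := bitCompl_add_add_one (n := n) (by omega)
    have hm := bitCompl_lt (n := n) (by omega)
    by_cases h : bitCompl n ≤ i
    · rw [partner_of_bitCompl_le h]; omega
    · rw [partner_of_lt_bitCompl (by omega)]
      exact (ih _ (by omega) (by omega)).trans (by omega)

lemma partner_partner {n i : ℕ} (hi : i < n) : partner n (partner n i) = i := by
  induction n using Nat.strong_induction_on generalizing i with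
  | _ n ih =>
    have hP := bitCompl_add_add_one (n := n) (by omega)
    have hm := bitCompl_lt (n := n) (by omega)
    by_cases h : bitCompl n ≤ i
    · rw [partner_of_bitCompl_le h, partner_of_bitCompl_le (by omega)]; omega
    · have hi' : i < bitCompl n := by omega
      have := partner_lt hi'
      rw [partner_of_lt_bitCompl hi', partner_of_lt_bitCompl this, ih _ hm hi']

lemma exists_partner_add_eq_two_pow {n i : ℕ} (hi : i < n) :
    ∃ k, partner n i + i + 2 = 2 ^ (k + 1) := by
  induction n using Nat.strong_induction_on generalizing i with
  | _ n ih =>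
    by_cases h : bitCompl n ≤ i
    · obtain ⟨s, hs, -, -⟩ := exists_size_eq_succ (n := n) (by omega)
      have hP := bitCompl_add_add_one (n := n) (by omega)
      exact ⟨s, by rw [partner_of_bitCompl_le h, ← hs]; omega⟩
    · rw [partner_of_lt_bitCompl (by omega)]
      exact ih _ (bitCompl_lt (by omega)) (by omega)

def pairingPerm (n : ℕ) : Perm (Fin n) :=
  Function.Involutive.toPerm (fun i => ⟨partner n i, partner_lt i.2⟩)
    fun i => Fin.ext (partner_partner i.2)

@[simp]
lemma pairingPerm_apply_val {n : ℕ} (i : Fin n) : (pairingPerm n i : ℕ) = partner n i := rfl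

lemma add_add_two_eq_two_pow_size {n x y k : ℕ} (hx : x < n) (hy : y < n)
    (hk : x + y + 2 = 2 ^ (k + 1)) (hbig : 2 ^ n.size ≤ 2 * (x + 1)) :
    x + y + 2 = 2 ^ n.size := by
  obtain ⟨s, hs, -, hlt⟩ := exists_size_eq_succ (n := n) (by omega)
  rw [hs, pow_succ'] at hbig ⊢
  have hlow : 2 ^ s < 2 ^ (k + 1) := by omega
  have hhigh : 2 ^ (k + 1) < 2 ^ (s + 2) := by rw [pow_succ, pow_succ]; omega
  rw [Nat.pow_lt_pow_iff_right (by norm_num)] at hlow hhigh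
  rw [hk, show k + 1 = s + 1 by omega, pow_succ']

section Uniqueness

variable {N : ℕ} {σ : Perm (Fin N)} (hσ : ∀ i, ∃ k, (σ i : ℕ) + i + 2 = 2 ^ (k + 1))
include hσ

lemma apply_add_add_two_of_bitCompl_le {n : ℕ} (hnN : n ≤ N)
    (hn : ∀ i : Fin N, (i : ℕ) < n ↔ (σ i : ℕ) < n) {i : Fin N} (hmi : bitCompl n ≤ i)
    (hin : (i : ℕ) < n) : (σ i : ℕ) + i + 2 = 2 ^ n.size := by
  have hP := bitCompl_add_add_one (n := n) (by omega)
  have forced : ∀ j : Fin N, (j : ℕ) < n →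
      2 ^ n.size ≤ 2 * ((j : ℕ) + 1) ∨ 2 ^ n.size ≤ 2 * ((σ j : ℕ) + 1) →
      (σ j : ℕ) + j + 2 = 2 ^ n.size := by
    intro j hj hbig
    obtain ⟨k, hk⟩ := hσ j
    have hσj := (hn j).mp hj
    rcases hbig with hbig | hbig
    · rw [add_comm (σ j : ℕ)] at hk ⊢
      exact add_add_two_eq_two_pow_size hj hσj hk hbig
    · exact add_add_two_eq_two_pow_size hσj hj hk hbig
  by_cases hbig : 2 ^ n.size ≤ 2 * ((i : ℕ) + 1)
  · exact forced i hin (Or.inl hbig)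
  -- the row mapped to the column `2 ^ n.size - 2 - i` is then forced to be `i`
  set j := σ.symm ⟨2 ^ n.size - 2 - i, by omega⟩
  have hσj : (σ j : ℕ) = 2 ^ n.size - 2 - i := by simp [j]
  have hj := forced j ((hn j).mpr (by omega)) (Or.inr (by omega))
  have : j = i := Fin.ext (by omega)
  rw [← this]
  omega

lemma lt_bitCompl_iff {n : ℕ} (hnN : n ≤ N) (hn : ∀ i : Fin N, (i : ℕ) < n ↔ (σ i : ℕ) < n)
    (i : Fin N) : (i : ℕ) < bitCompl n ↔ (σ i : ℕ) < bitCompl n := by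
  rcases eq_or_ne n 0 with rfl | hn0
  · simp [bitCompl]
  have hP := bitCompl_add_add_one hn0
  have hm := bitCompl_lt hn0
  constructor
  · intro hi
    by_contra! hσi
    have hσin := (hn i).mp (by omega)
    set j : Fin N := ⟨2 ^ n.size - 2 - σ i, by omega⟩
    have hj := apply_add_add_two_of_bitCompl_le hσ hnN hn (i := j) (by simp [j]; omega)
      (by simp [j]; omega)
    have : j = i := σ.injective (Fin.ext (by simp [j] at hj ⊢; omega))
    rw [← this] at hi
    simp only [j] at hi
    omega
  · intro hσi
    by_contra! hi
    by_cases hin : (i : ℕ) < n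
    · have := apply_add_add_two_of_bitCompl_le hσ hnN hn hi hin
      omega
    · have := (hn i).not.mp hin
      omega

lemma apply_eq_partner {n : ℕ} (hnN : n ≤ N) (hn : ∀ i : Fin N, (i : ℕ) < n ↔ (σ i : ℕ) < n)
    {i : Fin N} (hi : (i : ℕ) < n) : (σ i : ℕ) = partner n i := by
  induction n using Nat.strong_induction_on generalizing i with
  | _ n ih =>
    have hm := bitCompl_lt (n := n) (by omega)
    by_cases hmi : bitCompl n ≤ i
    · have := apply_add_add_two_of_bitCompl_le hσ hnN hn hmi hi
      rw [partner_of_bitCompl_le hmi]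
      omega
    · rw [partner_of_lt_bitCompl (by omega)]
      exact ih _ hm (by omega) (lt_bitCompl_iff hσ hnN hn) (by omega)

lemma eq_pairingPerm : σ = pairingPerm N :=
  Equiv.ext fun i => Fin.ext (apply_eq_partner hσ le_rfl (by simp) i.2)

end Uniqueness

lemma A_eq_one_of_exists {x : ℕ} (h : ∃ k, x + 2 = 2 ^ (k + 1)) : A x = 1 := by
  simp [A, h]

lemma exists_of_A_ne_zero {x : ℕ} (h : A x ≠ 0) : ∃ k, x + 2 = 2 ^ (k + 1) := by
  by_contra h'
  simp [A, h'] at h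

lemma det_hankel_eq_sign_pairingPerm (n : ℕ) :
    (Matrix.of fun i j : Fin n => A (i + j)).det = Perm.sign (pairingPerm n) := by
  simp only [Matrix.det_apply, Matrix.of_apply]
  rw [Fintype.sum_eq_single (pairingPerm n)]
  · have hone (i : Fin n) : A (pairingPerm n i + i) = 1 :=
      A_eq_one_of_exists (exists_partner_add_eq_two_pow i.2)
    rw [prod_eq_one fun i _ => hone i, Units.smul_def, smul_eq_mul, mul_one]
  intro σ hσ
  suffices ∃ i, A (σ i + i) = 0 by
    obtain ⟨i, hi⟩ := this
    rw [prod_eq_zero (mem_univ i) hi, smul_zero]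
  by_contra! h
  exact hσ (eq_pairingPerm fun i => exists_of_A_ne_zero (h i))

lemma Int.units_pow_eq_pow_of_mod_two_eq {u : ℤˣ} {a b : ℕ} (h : a % 2 = b % 2) :
    u ^ a = u ^ b := by
  rw [Int.units_pow_eq_pow_mod_two, h, ← Int.units_pow_eq_pow_mod_two]

lemma Fin.prod_neg_one_pow_sub_one_sub (k : ℕ) :
    ∏ i : Fin k, (-1 : ℤˣ) ^ (k - 1 - i) = (-1) ^ (k / 2) := by
  induction k with
  | zero => simp
  | succ k ih =>
    have hsucc : ∀ i : Fin k, k + 1 - 1 - (i.succ : ℕ) = k - 1 - i := fun i => by simp; omega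
    rw [Fin.prod_univ_succ, Fintype.prod_congr _ _ fun i => congrArg _ (hsucc i), ih, ← pow_add]
    refine Int.units_pow_eq_pow_of_mod_two_eq ?_
    norm_num
    rcases Nat.even_or_odd' k with ⟨q, rfl | rfl⟩ <;> omega

lemma Fin.sign_revPerm (k : ℕ) : Perm.sign (Fin.revPerm : Perm (Fin k)) = (-1) ^ (k / 2) := by
  rw [Perm.sign_eq_prod_prod_Ioi, ← Fin.prod_neg_one_pow_sub_one_sub]
  refine Finset.prod_congr rfl fun i _ => ?_
  rw [Finset.prod_congr rfl (g := fun _ => -1), Finset.prod_const, Fin.card_Ioi]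
  intro j hj
  simp [Fin.rev_lt_rev, le_of_lt (Finset.mem_Ioi.mp hj)]

lemma sign_pairingPerm_eq_mul (n : ℕ) :
    Perm.sign (pairingPerm n) =
      Perm.sign (pairingPerm (bitCompl n)) * (-1) ^ ((n - bitCompl n) / 2) := by
  rcases eq_or_ne n 0 with rfl | hn
  · have h0 : bitCompl 0 = 0 := by simp [bitCompl]
    rw [h0, Nat.zero_div, pow_zero, mul_one]
  have hm := bitCompl_lt hn
  have hP := bitCompl_add_add_one hn
  rw [← Fin.sign_revPerm, ← Perm.sign_sumCongr]
  refine (Perm.sign_eq_sign_of_equiv _ _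
    (finSumFinEquiv.trans (finCongr (by omega : bitCompl n + (n - bitCompl n) = n))) ?_).symm
  rintro (j | j) <;> ext
  · simp [partner_of_lt_bitCompl j.2]
  · simp [partner_of_bitCompl_le]
    omega

lemma deltaFn_eq_card_Ico {x K : ℕ} (hK : x.size ≤ K + 1) :
    deltaFn x = #{i ∈ Ico 1 K | x.testBit (i + 1) = true ∧ x.testBit i = false} +
      if x.testBit 1 = true ∧ x.testBit 0 = true then 1 else 0 := by
  rw [deltaFn]
  congr 2
  ext i
  simp only [mem_filter, mem_Icc, mem_Ico, and_congr_left_iff]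
  intro h
  have h2 : 2 ^ (i + 1) ≤ x := Nat.ge_two_pow_of_testBit h.1
  have h3 : i + 1 < x.size := Nat.lt_size.mpr h2
  have := Nat.lt_two_pow_self (n := i + 1)
  omega

lemma card_filter_succ_ne_add_toNat_mod_two (x : ℕ → Bool) {a b : ℕ} (hab : a ≤ b) :
    (#{i ∈ Ico a b | x (i + 1) ≠ x i} + (x a).toNat + (x b).toNat) % 2 = 0 := by
  induction b, hab using Nat.le_induction with
  | base => simp; omega
  | succ b hab ih =>
    rw [card_filter, sum_Ico_succ_top hab, ← card_filter]
    cases ha : x a <;> cases hb : x b <;> cases x (b + 1) <;> simp [ha, hb] at ih ⊢ <;> omega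

lemma testBit_bitCompl {n s : ℕ} (hs : n.size = s + 1) (i : ℕ) :
    (bitCompl n).testBit i = (decide (i < s + 1) && !n.testBit i) := by
  have hlt := Nat.lt_size_self n
  rw [hs] at hlt
  rw [bitCompl, hs, Nat.sub_sub, ← Nat.testBit_two_pow_sub_succ hlt, Nat.add_comm 1 n]

lemma deltaFn_add_deltaFn_bitCompl {n s : ℕ} (hs : n.size = s + 1) (hs1 : 1 ≤ s) :
    deltaFn n + deltaFn (bitCompl n) =
      #{i ∈ Ico 1 s | n.testBit (i + 1) ≠ n.testBit i} +
        if n.testBit 1 = n.testBit 0 then 1 else 0 := by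
  have hsize : (bitCompl n).size ≤ s + 1 := by
    rw [Nat.size_le, bitCompl, ← hs]
    have := Nat.one_le_two_pow (n := n.size)
    omega
  rw [deltaFn_eq_card_Ico hs.le, deltaFn_eq_card_Ico hsize]
  rw [card_filter, card_filter, card_filter, add_add_add_comm, ← sum_add_distrib]
  congr 1
  · refine sum_congr rfl fun i hi => ?_
    have hi : i + 1 < s + 1 := by simp only [mem_Ico] at hi; omega
    simp only [testBit_bitCompl hs, hi, (by omega : i < s + 1), decide_true, Bool.true_and]
    cases n.testBit (i + 1) <;> cases n.testBit i <;> simp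
  · simp only [testBit_bitCompl hs, (by omega : 1 < s + 1), (by omega : 0 < s + 1), decide_true,
      Bool.true_and]
    cases n.testBit 1 <;> cases n.testBit 0 <;> simp

lemma deltaFn_mod_two {n : ℕ} (hn : n ≠ 0) :
    deltaFn n % 2 = ((n - bitCompl n) / 2 + deltaFn (bitCompl n)) % 2 := by
  obtain ⟨s, hs, hle, hlt⟩ := exists_size_eq_succ hn
  have hP := bitCompl_add_add_one hn
  rw [hs, pow_succ'] at hP
  rcases Nat.eq_zero_or_pos s with rfl | hs1
  · obtain rfl : n = 1 := by simp at hle hlt; omega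
    rw [show bitCompl 1 = 0 by omega]
    decide
  have htop : n.testBit s = true :=
    Nat.testBit_of_two_pow_le_and_two_pow_add_one_gt hle (by rwa [pow_succ'])
  have hsum := deltaFn_add_deltaFn_bitCompl hs (by omega)
  have htel := card_filter_succ_ne_add_toNat_mod_two n.testBit (show 1 ≤ s by omega)
  have hpar : n % 2 = (n.testBit 0).toNat := by
    rw [Nat.testBit_zero]
    rcases Nat.mod_two_eq_zero_or_one n with h | h <;> simp [h]
  have heven : 2 ^ s % 2 = 0 := by simp [Nat.pow_mod, hs1.ne']
  rw [htop] at htel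
  cases h1 : n.testBit 1 <;> cases h0 : n.testBit 0 <;> simp [h1, h0] at hsum htel hpar <;> omega

lemma sign_pairingPerm (n : ℕ) : Perm.sign (pairingPerm n) = (-1) ^ deltaFn n := by
  induction n using Nat.strong_induction_on with
  | _ n ih =>
    rcases eq_or_ne n 0 with rfl | hn
    · rw [Subsingleton.elim (pairingPerm 0) 1, map_one]
      rfl
    rw [sign_pairingPerm_eq_mul, ih _ (bitCompl_lt hn), ← pow_add]
    exact Int.units_pow_eq_pow_of_mod_two_eq (by rw [deltaFn_mod_two hn]; omega)

theorem stmt6 (n : ℕ) : D n = (-1 : ℤ) ^ deltaFn n := by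
  rw [D, det_hankel_eq_sign_pairingPerm, sign_pairingPerm, Units.val_pow_eq_pow_val, Units.val_neg,
    Units.val_one]
end

section
/- D(2n) = (-1)^(n choose 2) · D(n) and D(2n+1) = (-1)^((n+1) choose 2) · D(n), with D(0) = 1. -/
/-!
Interleaving even and odd indices turns the Hankel matrix of `A` of size `N` into a block
matrix whose blocks are Hankel matrices of the decimated sequences `A (2 m)`, `A (2 m + 1) = 0`
and `A (2 m + 2) = A m`. Hence `D (2 n) = E n * D n` and `D (2 n + 1) = E (n + 1) * D n`, where
`E n` is the Hankel determinant of `B m = A (2 m)`, the indicator of `m + 1 ∈ 2 ^ ℕ`. Decimating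
`B` in the same way gives `E (2 n) = (-1) ^ n * E n ^ 2`; for odd sizes one first takes the Schur
complement of the entry `B 0 = 1`, after which decimation gives `E (2 n + 1) = (-1) ^ n * D n ^ 2`.
By induction `D n = ± 1` and `E n = (-1) ^ (n choose 2)`.
-/

open Matrix

section BlockDet

variable {m R : Type*} [Fintype m] [DecidableEq m] [CommRing R]

theorem det_fromBlocks_zero_one_one_zero :
    (fromBlocks 0 1 1 0 : Matrix (m ⊕ m) (m ⊕ m) R).det = (-1) ^ Fintype.card m := by
  have h : (fromBlocks 0 1 1 0 : Matrix (m ⊕ m) (m ⊕ m) R) =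
      fromBlocks 1 1 0 1 * fromBlocks 1 0 (-1) 1 * fromBlocks 1 1 0 1 * fromBlocks (-1) 0 0 1 := by
    simp [fromBlocks_multiply]
  rw [h, det_mul, det_mul, det_mul, det_fromBlocks_zero₂₁, det_fromBlocks_zero₁₂,
    det_fromBlocks_zero₂₁]
  simp [det_neg]

theorem det_fromBlocks_zero₂₂ (P Q S : Matrix m m R) :
    (fromBlocks P Q S 0).det = (-1) ^ Fintype.card m * (Q.det * S.det) := by
  have h : fromBlocks P Q S 0 = fromBlocks Q P 0 S * fromBlocks 0 1 1 0 := by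
    simp [fromBlocks_multiply]
  rw [h, det_mul, det_fromBlocks_zero₂₁, det_fromBlocks_zero_one_one_zero]
  ring

end BlockDet

theorem vecMulVec_sumElim_zero {l m n o R : Type*} [MulZeroClass R] (u : l → R) (v : n → R) :
    vecMulVec (Sum.elim u fun _ : m => 0) (Sum.elim v fun _ : o => 0) =
      fromBlocks (vecMulVec u v) 0 0 0 := by
  ext (a | a) (b | b) <;> simp [vecMulVec]

theorem submatrix_vecMulVec {l m n o R : Type*} [Mul R] (u : m → R) (v : o → R) (e : l → m)
    (f : n → o) : (vecMulVec u v).submatrix e f = vecMulVec (u ∘ e) (v ∘ f) := rfl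

def finEvenOddEquiv {N p q : ℕ} (hp : p = (N + 1) / 2) (hq : q = N / 2) :
    Fin p ⊕ Fin q ≃ Fin N where
  toFun := Sum.elim (fun a => ⟨2 * a, by omega⟩) (fun b => ⟨2 * b + 1, by omega⟩)
  invFun i :=
    if h : (i : ℕ) % 2 = 0 then .inl ⟨i / 2, by omega⟩ else .inr ⟨i / 2, by omega⟩
  left_inv := by
    rintro (a | b)
    · simp
    · simp [Fin.ext_iff]
      omega
  right_inv i := by
    by_cases h : (i : ℕ) % 2 = 0 <;> simp [h, Fin.ext_iff] <;> omega

theorem comp_finEvenOddEquiv {R : Type*} (f : ℕ → R) {N p q : ℕ} (hp : p = (N + 1) / 2)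
    (hq : q = N / 2) :
    (fun i : Fin N => f i) ∘ finEvenOddEquiv hp hq =
      Sum.elim (fun a : Fin p => f (2 * a)) (fun b : Fin q => f (2 * b + 1)) := by
  ext (a | b) <;> rfl

def hankel {R : Type*} (f : ℕ → R) (p q : ℕ) : Matrix (Fin p) (Fin q) R :=
  of fun i j => f (i + j)

section Hankel

variable {R : Type*}

@[simp]
theorem hankel_apply (f : ℕ → R) {p q : ℕ} (i : Fin p) (j : Fin q) :
    hankel f p q i j = f (i + j) := rfl

theorem hankel_zero [Zero R] (p q : ℕ) : hankel (fun _ => (0 : R)) p q = 0 := rfl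

theorem hankel_submatrix_finEvenOddEquiv (f : ℕ → R) {N p q : ℕ} (hp : p = (N + 1) / 2)
    (hq : q = N / 2) :
    (hankel f N N).submatrix (finEvenOddEquiv hp hq) (finEvenOddEquiv hp hq) =
      fromBlocks (hankel (fun m => f (2 * m)) p p) (hankel (fun m => f (2 * m + 1)) p q)
        (hankel (fun m => f (2 * m + 1)) q p) (hankel (fun m => f (2 * m + 2)) q q) := by
  ext (a | a) (b | b) <;> simp [finEvenOddEquiv] <;> congr 1 <;> ring

variable [CommRing R]

theorem det_hankel_eq_det_fromBlocks (f : ℕ → R) {N p q : ℕ} (hp : p = (N + 1) / 2)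
    (hq : q = N / 2) :
    (hankel f N N).det =
      (fromBlocks (hankel (fun m => f (2 * m)) p p) (hankel (fun m => f (2 * m + 1)) p q)
        (hankel (fun m => f (2 * m + 1)) q p) (hankel (fun m => f (2 * m + 2)) q q)).det := by
  rw [← hankel_submatrix_finEvenOddEquiv f hp hq, det_submatrix_equiv_self]

theorem det_hankel_succ_of_zero_eq_one (f : ℕ → R) (hf : f 0 = 1) (N : ℕ) :
    (hankel f (N + 1) (N + 1)).det =
      (hankel (fun m => f (m + 2)) N N -
        vecMulVec (fun i : Fin N => f (i + 1)) (fun i : Fin N => f (i + 1))).det := by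
  let e : Fin N ⊕ Unit ≃ Fin (N + 1) :=
    ((finSuccEquiv N).trans (Equiv.optionEquivSumPUnit (Fin N))).symm
  have h : (hankel f (N + 1) (N + 1)).submatrix e e =
      fromBlocks (hankel (fun m => f (m + 2)) N N) (replicateCol Unit fun i : Fin N => f (i + 1))
        (replicateRow Unit fun i : Fin N => f (i + 1)) 1 := by
    ext (a | a) (b | b) <;> simp [e, hf, Fin.val_succ, add_add_add_comm]
  rw [← det_submatrix_equiv_self e, h, det_fromBlocks_one₂₂, vecMulVec_eq Unit]

end Hankel

theorem neg_one_pow_choose_two_succ (m : ℕ) :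
    (-1 : ℤ) ^ (m + 1).choose 2 = (-1) ^ m * (-1) ^ m.choose 2 := by
  rw [Nat.choose_succ_succ', Nat.choose_one_right, pow_add]

theorem neg_one_pow_choose_two_two_mul (n : ℕ) : (-1 : ℤ) ^ (2 * n).choose 2 = (-1) ^ n := by
  induction n with
  | zero => rfl
  | succ n ih =>
    rw [mul_add_one, neg_one_pow_choose_two_succ, neg_one_pow_choose_two_succ, ih]
    simp [pow_succ]

theorem neg_one_pow_choose_two_two_mul_add_one (n : ℕ) :
    (-1 : ℤ) ^ (2 * n + 1).choose 2 = (-1) ^ n := by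
  rw [neg_one_pow_choose_two_succ, neg_one_pow_choose_two_two_mul, pow_mul]
  simp

theorem A_zero_s7 : A 0 = 1 := if_pos ⟨0, rfl⟩

theorem A_two_mul_add_one (m : ℕ) : A (2 * m + 1) = 0 := by
  refine if_neg ?_
  rintro ⟨k, hk⟩
  rw [pow_succ] at hk
  omega

theorem A_two_mul_add_two (m : ℕ) : A (2 * m + 2) = A m := by
  unfold A
  congr 1
  refine propext
    ⟨fun ⟨k, hk⟩ => ?_, fun ⟨k, hk⟩ => ⟨k + 1, by rw [pow_succ]; omega⟩⟩
  rcases k with _ | k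
  · omega
  · exact ⟨k, by rw [pow_succ] at hk; omega⟩

theorem D_eq_det_hankel (n : ℕ) : D n = (hankel A n n).det := rfl

noncomputable def E (n : ℕ) : ℤ := (hankel (fun m => A (2 * m)) n n).det

theorem D_two_mul (n : ℕ) : D (2 * n) = E n * D n := by
  rw [D_eq_det_hankel, det_hankel_eq_det_fromBlocks A (p := n) (q := n) (by omega) (by omega)]
  simp only [A_two_mul_add_one, A_two_mul_add_two, hankel_zero, det_fromBlocks_zero₁₂]
  rfl

theorem D_two_mul_add_one (n : ℕ) : D (2 * n + 1) = E (n + 1) * D n := by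
  rw [D_eq_det_hankel, det_hankel_eq_det_fromBlocks A (p := n + 1) (q := n) (by omega) (by omega)]
  simp only [A_two_mul_add_one, A_two_mul_add_two, hankel_zero, det_fromBlocks_zero₁₂]
  rfl

theorem E_two_mul (n : ℕ) : E (2 * n) = (-1) ^ n * (E n * E n) := by
  have h₁ (m : ℕ) : A (2 * (2 * m + 1)) = A (2 * m) := A_two_mul_add_two (2 * m)
  have h₂ (m : ℕ) : A (2 * (2 * m + 2)) = 0 := by
    rw [show 2 * (2 * m + 2) = 2 * (2 * m + 1) + 2 by ring, A_two_mul_add_two, A_two_mul_add_one]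
  rw [E, det_hankel_eq_det_fromBlocks _ (p := n) (q := n) (by omega) (by omega)]
  simp only [h₁, h₂, hankel_zero, det_fromBlocks_zero₂₂, Fintype.card_fin]
  rfl

theorem E_two_mul_add_one (n : ℕ) : E (2 * n + 1) = (-1) ^ n * (D n * D n) := by
  have hg : (fun m => A (2 * (m + 2))) = fun m => A (m + 1) :=
    funext fun m => A_two_mul_add_two (m + 1)
  have hc : (fun i : Fin (2 * n) => A (2 * (i + 1))) = fun i : Fin (2 * n) => A i :=
    funext fun i => A_two_mul_add_two i
  have h₃ (m : ℕ) : A (2 * m + 2 + 1) = 0 := A_two_mul_add_one (m + 1)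
  let e := finEvenOddEquiv (N := 2 * n) (p := n) (q := n) (by omega) (by omega)
  rw [E, det_hankel_succ_of_zero_eq_one (fun m => A (2 * m)) A_zero_s7, hg, hc,
    ← det_submatrix_equiv_self e, submatrix_sub, Pi.sub_apply, Pi.sub_apply,
    hankel_submatrix_finEvenOddEquiv, submatrix_vecMulVec, comp_finEvenOddEquiv]
  simp only [A_two_mul_add_one, A_two_mul_add_two, h₃, hankel_zero, vecMulVec_sumElim_zero,
    sub_eq_add_neg, fromBlocks_neg, fromBlocks_add, neg_zero, add_zero, zero_add,
    det_fromBlocks_zero₂₂, Fintype.card_fin]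
  rfl

theorem neg_one_pow_mul_self (k : ℕ) : (-1 : ℤ) ^ k * (-1) ^ k = 1 :=
  pow_mul_pow_eq_one k rfl

theorem E_eq_and_D_mul_self (n : ℕ) :
    E n = (-1) ^ n.choose 2 ∧ E (n + 1) = (-1) ^ (n + 1).choose 2 ∧ D n * D n = 1 := by
  induction n using Nat.evenOddRec with
  | h0 => exact ⟨det_isEmpty, by simp [E, A_zero_s7], by simp [D_eq_det_hankel]⟩
  | h_even n ih =>
    obtain ⟨hE, -, hD⟩ := ih
    refine ⟨?_, ?_, ?_⟩
    · rw [E_two_mul, hE, neg_one_pow_mul_self, mul_one, neg_one_pow_choose_two_two_mul]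
    · rw [E_two_mul_add_one, hD, mul_one, neg_one_pow_choose_two_two_mul_add_one]
    · rw [D_two_mul, mul_mul_mul_comm, hE, neg_one_pow_mul_self, hD, one_mul]
  | h_odd n ih =>
    obtain ⟨-, hE', hD⟩ := ih
    refine ⟨?_, ?_, ?_⟩
    · rw [E_two_mul_add_one, hD, mul_one, neg_one_pow_choose_two_two_mul_add_one]
    · rw [show 2 * n + 1 + 1 = 2 * (n + 1) by ring, E_two_mul, hE', neg_one_pow_mul_self, mul_one,
        neg_one_pow_choose_two_two_mul]
    · rw [D_two_mul_add_one, mul_mul_mul_comm, hE', neg_one_pow_mul_self, hD, one_mul]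

theorem stmt7 :
    D 0 = 1 ∧
    (∀ n : ℕ, D (2 * n) = (-1 : ℤ) ^ (n.choose 2) * D n) ∧
    (∀ n : ℕ, D (2 * n + 1) = (-1 : ℤ) ^ ((n + 1).choose 2) * D n) := by
  refine ⟨det_isEmpty, fun n => ?_, fun n => ?_⟩
  · rw [D_two_mul, (E_eq_and_D_mul_self n).1]
  · rw [D_two_mul_add_one, (E_eq_and_D_mul_self n).2.1]
end

section
/- D(n) = ∏_{j=0}^{n-1} S(j), where S is the paperfolding sequence defined by S(0) = 1, S(2n) = (-1)^n, S(2n+1) = S(n). -/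
/-!
Write `p = 2 ^ H ≤ n < 2 p` and `m = 2 p - 1 - n`. In the Hankel matrix `(A (i + j))` of size `n`
every entry with `p - 1 ≤ i + j` vanishes except those on the anti-diagonal `i + j = 2 p - 2`,
which meets exactly the rows `m, …, n - 1`. Reversing these rows (a product of `n - p`
transpositions) makes the matrix block triangular, with the Hankel matrix of size `m` and two
identity matrices on the diagonal, so `D n = (-1) ^ (n - p) * D m`. On the other side
`S (p - 1) = 1` and `S j * S (2 p - 2 - j) = -1` for `j < p - 1`, so the product of `S` over
`[m, n)` is `(-1) ^ (n - p)` as well, and strong induction on `n` concludes.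
-/

open Matrix Equiv Finset

lemma A_eq_zero_of_lt_of_lt {H k : ℕ} (h1 : 2 ^ H < k + 2) (h2 : k + 2 < 2 * 2 ^ H) : A k = 0 := by
  refine if_neg ?_
  rintro ⟨j, hj⟩
  rw [hj] at h1 h2
  have hH : H < j + 1 := (pow_lt_pow_iff_right₀ one_lt_two).mp h1
  have hj : j + 1 < H + 1 :=
    (pow_lt_pow_iff_right₀ one_lt_two).mp (by rwa [pow_succ 2 H, mul_comm])
  omega

lemma A_eq_ite_of_lt_of_lt {H k : ℕ} (h1 : 2 ^ H < k + 2) (h2 : k + 2 < 4 * 2 ^ H) :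
    A k = if k + 2 = 2 * 2 ^ H then 1 else 0 := by
  split_ifs with hk
  · exact if_pos ⟨H, by rw [hk, pow_succ, mul_comm]⟩
  rcases Nat.lt_or_gt_of_ne hk with hlt | hgt
  · exact A_eq_zero_of_lt_of_lt h1 hlt
  · exact A_eq_zero_of_lt_of_lt (H := H + 1) (by rwa [pow_succ, mul_comm])
      (by rw [pow_succ]; omega)

def segmentReflection (n a d : ℕ) (h : a + 2 * d < n) : Perm (Fin n) :=
  Function.Involutive.toPerm
    (fun i => if hi : a ≤ i ∧ (i : ℕ) ≤ a + 2 * d then ⟨2 * a + 2 * d - i, by omega⟩ else i)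
    (fun i => by dsimp only; split_ifs <;> simp_all [Fin.ext_iff] <;> omega)

lemma segmentReflection_val {n a d : ℕ} (h : a + 2 * d < n) (i : Fin n) :
    (segmentReflection n a d h i : ℕ) =
      if a ≤ i ∧ (i : ℕ) ≤ a + 2 * d then 2 * a + 2 * d - i else i := by
  simp only [segmentReflection, Function.Involutive.toPerm, Equiv.coe_fn_mk]
  split_ifs <;> rfl

lemma segmentReflection_zero {n a : ℕ} (h : a + 2 * 0 < n) : segmentReflection n a 0 h = 1 := by
  ext i
  rw [segmentReflection_val, Perm.one_apply]
  split_ifs <;> omega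

lemma segmentReflection_succ {n a d : ℕ} (h : a + 2 * (d + 1) < n) :
    segmentReflection n a (d + 1) h =
      swap ⟨a, by omega⟩ ⟨a + 2 * d + 2, by omega⟩ * segmentReflection n (a + 1) d (by omega) := by
  ext i
  rw [Perm.mul_apply, segmentReflection_val, swap_apply_def]
  have hi := segmentReflection_val (a := a + 1) (d := d) (by omega) i
  split_ifs at hi ⊢ <;> simp_all [Fin.ext_iff] <;> omega

lemma sign_segmentReflection {n a d : ℕ} (h : a + 2 * d < n) :
    Perm.sign (segmentReflection n a d h) = (-1) ^ d := by
  induction d generalizing a with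
  | zero => rw [segmentReflection_zero, map_one, pow_zero]
  | succ d ih =>
    rw [segmentReflection_succ, map_mul, ih, Perm.sign_swap (by simp [Fin.ext_iff]; omega),
      pow_succ']

noncomputable def hankelA (n : ℕ) : Matrix (Fin n) (Fin n) ℤ :=
  of fun i j : Fin n => A ((i : ℕ) + j)

lemma det_hankelA (n : ℕ) : (hankelA n).det = D n := rfl

section Reflection

variable {H n : ℕ} (hlo : 2 ^ H ≤ n) (hhi : n < 2 * 2 ^ H)

noncomputable def reflectedHankelA : Matrix (Fin n) (Fin n) ℤ :=
  (hankelA n).submatrix (segmentReflection n (2 * 2 ^ H - 1 - n) (n - 2 ^ H) (by omega)) id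

lemma reflectedHankelA_apply (i j : Fin n) :
    reflectedHankelA hlo hhi i j =
      A ((if 2 * 2 ^ H - 1 - n ≤ (i : ℕ) then 2 * 2 ^ H - 2 - (i : ℕ) else i) + j) := by
  simp only [reflectedHankelA, hankelA, submatrix_apply, of_apply, id, segmentReflection_val]
  congr 2
  split_ifs <;> omega

lemma reflectedHankelA_apply_of_le {i j : Fin n} (hi : 2 * 2 ^ H - 1 - n ≤ (i : ℕ))
    (hij : (i : ℕ) < j + 2 ^ H) : reflectedHankelA hlo hhi i j = if i = j then 1 else 0 := by
  rw [reflectedHankelA_apply, if_pos hi, A_eq_ite_of_lt_of_lt (H := H) (by omega) (by omega)]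
  exact if_congr (by omega) rfl rfl

lemma reflectedHankelA_apply_of_lt {i j : Fin n} (hi : (i : ℕ) < 2 * 2 ^ H - 1 - n)
    (hj : 2 ^ H - 1 ≤ (j : ℕ)) : reflectedHankelA hlo hhi i j = 0 := by
  rw [reflectedHankelA_apply, if_neg (by omega)]
  exact A_eq_zero_of_lt_of_lt (H := H) (by omega) (by omega)

/-- Block `1` is `[0, m)`, and blocks `2` and `0` are `[m, p - 1)` and `[p - 1, n)`, on which the
reflected matrix is the identity; this numbering puts every other nonzero entry above the diagonal
blocks. -/
def reflectionBlock (H n : ℕ) (i : Fin n) : Fin 3 :=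
  if (i : ℕ) < 2 * 2 ^ H - 1 - n then 1 else if (i : ℕ) < 2 ^ H - 1 then 2 else 0

lemma reflectedHankelA_blockTriangular :
    (reflectedHankelA hlo hhi).BlockTriangular (reflectionBlock H n) := by
  intro i j hij
  simp only [reflectionBlock] at hij
  split_ifs at hij <;> first
    | exact absurd hij (by decide)
    | exact reflectedHankelA_apply_of_lt hlo hhi (by omega) (by omega)
    | rw [reflectedHankelA_apply_of_le hlo hhi (by omega) (by omega),
        if_neg (by simp only [Fin.ext_iff]; omega)]

lemma toSquareBlock_reflectedHankelA_of_ne_one {k : Fin 3} (hk : k ≠ 1) :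
    (reflectedHankelA hlo hhi).toSquareBlock (reflectionBlock H n) k = 1 := by
  ext ⟨i, hi⟩ ⟨j, hj⟩
  simp only [toSquareBlock_def, of_apply, one_apply, Subtype.mk.injEq]
  simp only [reflectionBlock] at hi hj
  subst hi
  split_ifs at hj hk <;> first
    | exact absurd hk (by decide)
    | exact absurd hj (by decide)
    | exact reflectedHankelA_apply_of_le hlo hhi (by omega) (by omega)

lemma det_toSquareBlock_reflectedHankelA_one :
    ((reflectedHankelA hlo hhi).toSquareBlock (reflectionBlock H n) 1).det =
      (hankelA (2 * 2 ^ H - 1 - n)).det := by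
  let e : Fin (2 * 2 ^ H - 1 - n) ≃ {i // reflectionBlock H n i = 1} :=
    (Fin.castLEquiv (by omega)).trans <| subtypeEquivRight fun i => by
      simp only [reflectionBlock]
      split_ifs <;> simp_all
  rw [← det_submatrix_equiv_self e]
  congr 1
  ext a c
  simp only [e, toSquareBlock_def, reflectedHankelA_apply, hankelA, coe_trans, submatrix_apply,
    Function.comp_apply, Fin.castLEquiv_apply, of_apply, subtypeEquivRight_apply_coe,
    Fin.val_castLE]
  rw [if_neg (by omega)]

end Reflection

lemma D_eq_neg_one_pow_mul_D {H n : ℕ} (hlo : 2 ^ H ≤ n) (hhi : n < 2 * 2 ^ H) :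
    D n = (-1) ^ (n - 2 ^ H) * D (2 * 2 ^ H - 1 - n) := by
  have h := (reflectedHankelA_blockTriangular hlo hhi).det_fintype
  rw [Fin.prod_univ_three, toSquareBlock_reflectedHankelA_of_ne_one hlo hhi (k := 0) (by decide),
    toSquareBlock_reflectedHankelA_of_ne_one hlo hhi (k := 2) (by decide),
    det_toSquareBlock_reflectedHankelA_one, det_one, det_one, one_mul, mul_one, reflectedHankelA,
    det_permute, sign_segmentReflection, det_hankelA, det_hankelA] at h
  rw [← h, Int.cast_id, Units.val_pow_eq_pow_val, Units.val_neg, Units.val_one, ← mul_assoc,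
    ← mul_pow, neg_one_mul, neg_neg, one_pow, one_mul]

lemma S_two_pow_sub_one {S : ℕ → ℤ} (hS0 : S 0 = 1) (hSo : ∀ n : ℕ, S (2 * n + 1) = S n)
    (u : ℕ) : S (2 ^ u - 1) = 1 := by
  induction u with
  | zero => exact hS0
  | succ u ih =>
    have h : 2 ^ (u + 1) - 1 = 2 * (2 ^ u - 1) + 1 := by
      have := Nat.one_le_two_pow (n := u)
      rw [pow_succ]; omega
    rw [h, hSo, ih]

lemma S_mul_S_eq_neg_one {S : ℕ → ℤ} (hSe : ∀ n : ℕ, S (2 * n) = (-1 : ℤ) ^ n)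
    (hSo : ∀ n : ℕ, S (2 * n + 1) = S n) {H j : ℕ} (hj : j < 2 ^ H - 1) :
    S j * S (2 * 2 ^ H - 2 - j) = -1 := by
  induction H generalizing j with
  | zero => simp at hj
  | succ H ih =>
    rw [pow_succ] at hj ⊢
    rcases Nat.even_or_odd' j with ⟨a, rfl | rfl⟩
    · rw [show 2 * (2 ^ H * 2) - 2 - 2 * a = 2 * (2 * 2 ^ H - 1 - a) by omega, hSe, hSe, ← pow_add,
        show a + (2 * 2 ^ H - 1 - a) = 2 * (2 ^ H - 1) + 1 by omega]
      exact Odd.neg_one_pow (odd_two_mul_add_one _)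
    · rw [show 2 * (2 ^ H * 2) - 2 - (2 * a + 1) = 2 * (2 * 2 ^ H - 2 - a) + 1 by omega, hSo, hSo]
      exact ih (by omega)

lemma prod_S_Ico {S : ℕ → ℤ} (hS0 : S 0 = 1) (hSe : ∀ n : ℕ, S (2 * n) = (-1 : ℤ) ^ n)
    (hSo : ∀ n : ℕ, S (2 * n + 1) = S n) {H t : ℕ} (ht : t < 2 ^ H) :
    ∏ j ∈ Ico (2 ^ H - 1 - t) (2 ^ H + t), S j = (-1) ^ t := by
  induction t with
  | zero =>
    rw [add_zero, Nat.sub_zero, Nat.Ico_pred_singleton (Nat.two_pow_pos H), prod_singleton,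
      S_two_pow_sub_one hS0 hSo, pow_zero]
  | succ t ih =>
    rw [prod_eq_prod_Ico_succ_bot (by omega),
      show 2 ^ H - 1 - (t + 1) + 1 = 2 ^ H - 1 - t by omega,
      show 2 ^ H + (t + 1) = (2 ^ H + t) + 1 by omega, prod_Ico_succ_top (by omega), ih (by omega),
      pow_succ]
    have := S_mul_S_eq_neg_one hSe hSo (j := 2 ^ H - 1 - (t + 1)) (H := H) (by omega)
    rw [show 2 * 2 ^ H - 2 - (2 ^ H - 1 - (t + 1)) = 2 ^ H + t by omega] at this
    linear_combination (-1 : ℤ) ^ t * this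

theorem stmt8 (S : ℕ → ℤ) (hS0 : S 0 = 1)
    (hSe : ∀ n : ℕ, S (2 * n) = (-1 : ℤ) ^ n)
    (hSo : ∀ n : ℕ, S (2 * n + 1) = S n) :
    ∀ n : ℕ, D n = ∏ j ∈ Finset.range n, S j := by
  intro n
  induction n using Nat.strong_induction_on with
  | _ n ih =>
    rcases n.eq_zero_or_pos with rfl | hn
    · simp [D]
    set H := Nat.log 2 n
    have hlo : 2 ^ H ≤ n := Nat.pow_log_le_self 2 hn.ne'
    have hhi : n < 2 * 2 ^ H := by
      have := Nat.lt_pow_succ_log_self one_lt_two n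
      rwa [pow_succ, mul_comm] at this
    set m := 2 * 2 ^ H - 1 - n
    have hwindow : Ico m n = Ico (2 ^ H - 1 - (n - 2 ^ H)) (2 ^ H + (n - 2 ^ H)) := by
      congr 1 <;> omega
    calc D n = (-1) ^ (n - 2 ^ H) * D m := D_eq_neg_one_pow_mul_D hlo hhi
      _ = (∏ j ∈ range m, S j) * ∏ j ∈ Ico m n, S j := by
        rw [ih m (by omega), hwindow, prod_S_Ico hS0 hSe hSo (by omega), mul_comm]
      _ = ∏ j ∈ range n, S j := prod_range_mul_prod_Ico S (by omega)
end

section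
/- For k ≥ 2 and 2^k ≤ n ≤ 2^{k+1} - 3, T_n = T_{2^{k+1} - 3 - n}. -/
noncomputable def T (n : ℕ) : ℤ := D n * D (n + 2)

noncomputable def Jmat (s : ℕ) : Matrix (Fin s) (Fin s) ℤ :=
  Matrix.of fun i j => if (i : ℕ) + (j : ℕ) + 1 = s then 1 else 0

lemma A_eq_one_iff (x : ℕ) : A x = 1 ↔ ∃ t : ℕ, x + 2 = 2 ^ (t + 1) := by
  unfold A; split <;> simp_all


lemma A_01 (x : ℕ) : A x = 0 ∨ A x = 1 := by
  unfold A; split <;> simp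


lemma pow_force {k t x : ℕ} (h1 : 2 ^ k < x) (h2 : x ≤ 2 ^ (k + 2) - 2) (h3 : x = 2 ^ (t + 1)) :
    x = 2 ^ (k + 1) := by
  subst h3
  have hlt : k < t + 1 := by
    by_contra hc
    exact absurd (Nat.pow_le_pow_right (by norm_num) (not_lt.mp hc)) (not_le.mpr h1)
  have hub : 2 ^ (t + 1) < 2 ^ (k + 2) := by
    have : (2:ℕ) ^ (k+2) ≥ 2 := Nat.one_lt_two_pow (by omega)
    omega
  have : t + 1 < k + 2 := by
    by_contra hc
    exact absurd (Nat.pow_le_pow_right (by norm_num) (not_lt.mp hc)) (not_le.mpr hub)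
  have : t + 1 = k + 1 := by omega
  rw [this]


lemma forcing {k n m : ℕ} (hH : 2 ^ k ≤ n) (hN : n + m + 1 = 2 ^ (k + 1))
    (σ : Equiv.Perm (Fin n)) (hA : ∀ i : Fin n, A ((σ i : ℕ) + i) = 1) :
    ∀ i : Fin n, (m ≤ (i : ℕ) ∨ m ≤ (σ i : ℕ)) → (σ i : ℕ) + (i : ℕ) + 2 = 2 ^ (k + 1) := by
  have h2k : (2:ℕ) ^ (k+1) = 2 * 2 ^ k := by ring
  have h2k2 : (2:ℕ) ^ (k+2) = 2 * 2 ^ (k+1) := by ring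
  have hk1 : 1 ≤ 2 ^ k := Nat.one_le_two_pow
  -- (b): if either index is ≥ 2^k - 1 then the sum is 2^(k+1)
  have hb : ∀ i : Fin n, (2 ^ k - 1 ≤ (i : ℕ) ∨ 2 ^ k - 1 ≤ (σ i : ℕ)) →
      (σ i : ℕ) + (i : ℕ) + 2 = 2 ^ (k + 1) := by
    intro i hi
    obtain ⟨t, ht⟩ := (A_eq_one_iff _).mp (hA i)
    have h1 : (i : ℕ) < n := i.isLt
    have h2 : (σ i : ℕ) < n := (σ i).isLt
    exact pow_force (by omega) (by omega) ht
  -- (C): if both below 2^k - 1 then σ i < m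
  have hC : ∀ i : Fin n, (i : ℕ) < 2 ^ k - 1 → (σ i : ℕ) < 2 ^ k - 1 → (σ i : ℕ) < m := by
    intro i hi hsi
    by_contra hc
    push_neg at hc
    have hlt : 2 ^ (k+1) - 2 - (σ i : ℕ) < n := by
      have := (σ i).isLt
      omega
    set i' : Fin n := ⟨2 ^ (k+1) - 2 - (σ i : ℕ), hlt⟩ with hi'
    have hb' : (σ i' : ℕ) + (i' : ℕ) + 2 = 2 ^ (k + 1) := by
      apply hb
      left
      show 2 ^ k - 1 ≤ 2 ^ (k+1) - 2 - (σ i : ℕ)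
      omega
    have hvi' : (i' : ℕ) = 2 ^ (k+1) - 2 - (σ i : ℕ) := rfl
    have : (σ i' : ℕ) = (σ i : ℕ) := by omega
    have : σ i' = σ i := Fin.ext this
    have hii : i' = i := σ.injective this
    have hiv : (i : ℕ) = (i' : ℕ) := by rw [hii]
    omega
  -- step: x < m → σ x < m
  have hstep : ∀ x : Fin n, (x : ℕ) < m → (σ x : ℕ) < m := by
    intro x hx
    have hxH : (x : ℕ) < 2 ^ k - 1 := by omega
    have hsx : (σ x : ℕ) < 2 ^ k - 1 := by
      by_contra hc
      have := hb x (Or.inr (by omega))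
      have := x.isLt
      omega
    exact hC x hxH hsx
  -- orbit: σ i < m → i < m
  have horb : ∀ i : Fin n, (σ i : ℕ) < m → (i : ℕ) < m := by
    have hpow : ∀ j : ℕ, ∀ x : Fin n, (x : ℕ) < m → (((σ ^ j) x : ℕ)) < m := by
      intro j
      induction j with
      | zero => intro x hx; simpa using hx
      | succ j ih =>
        intro x hx
        have : (σ ^ (j+1)) x = (σ ^ j) (σ x) := by
          rw [pow_succ]; rfl
        rw [this]
        exact ih _ (hstep x hx)
    intro i hi
    obtain ⟨j, hj⟩ : ∃ j, orderOf σ = j + 1 := by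
      have := orderOf_pos σ
      exact ⟨orderOf σ - 1, by omega⟩
    have h1 : (σ ^ (j + 1)) i = i := by
      rw [← hj, pow_orderOf_eq_one]; rfl
    have h2 : (σ ^ (j+1)) i = (σ ^ j) (σ i) := by rw [pow_succ]; rfl
    have := hpow j (σ i) hi
    rw [← h2, h1] at this
    exact this
  -- final
  intro i hi
  by_cases hcase : 2 ^ k - 1 ≤ (i : ℕ) ∨ 2 ^ k - 1 ≤ (σ i : ℕ)
  · exact hb i hcase
  · push_neg at hcase
    exfalso
    have hsi := hC i hcase.1 hcase.2
    rcases hi with hi | hi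
    · exact absurd (horb i hsi) (by omega)
    · omega


lemma detJ_succ (s : ℕ) : (Jmat (s + 1)).det = (-1) ^ s * (Jmat s).det := by
  rw [Matrix.det_succ_row_zero]
  rw [Finset.sum_eq_single (Fin.last s)]
  · have h1 : Jmat (s+1) 0 (Fin.last s) = 1 := by
      simp [Jmat]
    rw [h1]
    have h2 : (Jmat (s+1)).submatrix Fin.succ (Fin.last s).succAbove = Jmat s := by
      ext i j
      simp [Jmat, Matrix.submatrix_apply, Fin.succAbove_last, Fin.coe_castSucc]
      omega
    rw [h2]
    simp [Fin.val_last]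
  · intro j _ hj
    have : Jmat (s+1) 0 j = 0 := by
      simp only [Jmat, Matrix.of_apply]
      rw [if_neg]
      intro h
      apply hj
      have : (j : ℕ) = s := by simpa using h
      exact Fin.ext (by simp [this, Fin.val_last])
    rw [this, mul_zero, zero_mul]
  · intro h
    exact absurd (Finset.mem_univ _) h


lemma detJ_sq (s : ℕ) : (Jmat s).det * (Jmat s).det = 1 := by
  induction s with
  | zero => simp [Jmat, Matrix.det_fin_zero]
  | succ s ih =>
    rw [detJ_succ]
    have : (-1 : ℤ) ^ s * (-1) ^ s = 1 := by
      rw [← pow_add]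
      exact (neg_one_pow_eq_one_iff_even (by norm_num)).mpr ⟨s, by ring⟩
    calc (-1:ℤ)^s * (Jmat s).det * ((-1)^s * (Jmat s).det)
        = ((-1:ℤ)^s * (-1)^s) * ((Jmat s).det * (Jmat s).det) := by ring
      _ = 1 := by rw [this, ih, one_mul]


lemma detJ_four (s : ℕ) : (Jmat (s + 4)).det = (Jmat s).det := by
  rw [show s + 4 = (s+3)+1 by ring, detJ_succ, show s + 3 = (s+2)+1 by ring, detJ_succ,
    show s + 2 = (s+1)+1 by ring, detJ_succ, detJ_succ]
  ring_nf
  rw [show s * 4 = 2 * (2 * s) by ring, pow_mul]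
  norm_num


lemma Dcore {k n m s : ℕ} (hH : 2 ^ k ≤ n) (hN : n + m + 1 = 2 ^ (k + 1)) (hms : m + s = n) :
    D n = (Jmat s).det * D m := by
  have hk1 : (1:ℕ) ≤ 2 ^ k := Nat.one_le_two_pow
  set M' : Matrix (Fin n) (Fin n) ℤ := Matrix.of (fun i j : Fin n =>
    if m ≤ (i : ℕ) ∨ m ≤ (j : ℕ) then (if (i:ℕ)+(j:ℕ)+2 = 2 ^ (k+1) then 1 else 0)
    else A ((i:ℕ)+(j:ℕ))) with hM'
  have step1 : D n = M'.det := by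
    unfold D
    rw [Matrix.det_apply, Matrix.det_apply]
    refine Finset.sum_congr rfl (fun σ _ => ?_)
    congr 1
    by_cases hall : ∀ i : Fin n, A ((σ i : ℕ) + i) = 1
    · have hf := forcing hH hN σ hall
      refine Finset.prod_congr rfl (fun i _ => ?_)
      show A ((σ i : ℕ) + i) = M' (σ i) i
      by_cases hcond : m ≤ ((σ i : Fin n) : ℕ) ∨ m ≤ (i : ℕ)
      · have hsum : (σ i : ℕ) + (i : ℕ) + 2 = 2 ^ (k+1) := hf i hcond.symm
        rw [hall i, hM']
        simp only [Matrix.of_apply]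
        rw [if_pos hcond, if_pos hsum]
      · rw [hM']
        simp only [Matrix.of_apply]
        rw [if_neg hcond]
    · push_neg at hall
      obtain ⟨i0, hi0⟩ := hall
      have hz : A ((σ i0 : ℕ) + i0) = 0 := (A_01 _).resolve_right hi0
      rw [Finset.prod_eq_zero (Finset.mem_univ i0), Finset.prod_eq_zero (Finset.mem_univ i0)]
      · show M' (σ i0) i0 = 0
        rw [hM']
        simp only [Matrix.of_apply]
        by_cases hcond : m ≤ ((σ i0 : Fin n) : ℕ) ∨ m ≤ (i0 : ℕ)
        · rw [if_pos hcond, if_neg]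
          intro hsum
          exact hi0 ((A_eq_one_iff _).mpr ⟨k, hsum⟩)
        · rw [if_neg hcond]; exact hz
      · exact hz
  have step2 : M'.det = (Jmat s).det * D m := by
    set E : Fin m ⊕ Fin s ≃ Fin n := finSumFinEquiv.trans (finCongr hms) with hE
    have hEl : ∀ i1 : Fin m, ((E (Sum.inl i1) : Fin n) : ℕ) = (i1 : ℕ) := by
      intro i1; rw [hE]; simp
    have hEr : ∀ i2 : Fin s, ((E (Sum.inr i2) : Fin n) : ℕ) = m + (i2 : ℕ) := by
      intro i2; rw [hE]; simp
    have hM'eq : M' = (Matrix.fromBlocks (Matrix.of fun i j : Fin m => A ((i : ℕ) + j)) 0 0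
        (Jmat s)).submatrix E.symm E.symm := by
      ext i j
      rcases hi : E.symm i with i1 | i2 <;> rcases hj : E.symm j with j1 | j2 <;>
        have hi' := congrArg E hi <;> have hj' := congrArg E hj <;>
        rw [Equiv.apply_symm_apply] at hi' hj' <;>
        simp only [hM', Matrix.submatrix_apply, hi, hj, Matrix.fromBlocks_apply₁₁,
          Matrix.fromBlocks_apply₁₂, Matrix.fromBlocks_apply₂₁, Matrix.fromBlocks_apply₂₂,
          Matrix.of_apply, Matrix.zero_apply]
      · have h1 : (i : ℕ) = (i1 : ℕ) := by rw [hi', hEl]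
        have h2 : (j : ℕ) = (j1 : ℕ) := by rw [hj', hEl]
        rw [if_neg (by omega : ¬(m ≤ (i:ℕ) ∨ m ≤ (j:ℕ))), h1, h2]
      · have h1 : (i : ℕ) = (i1 : ℕ) := by rw [hi', hEl]
        have h2 : (j : ℕ) = m + (j2 : ℕ) := by rw [hj', hEr]
        have hj2 := j2.isLt
        have hi1 := i1.isLt
        rw [if_pos (by omega : m ≤ (i:ℕ) ∨ m ≤ (j:ℕ)), if_neg (by omega)]
      · have h1 : (i : ℕ) = m + (i2 : ℕ) := by rw [hi', hEr]
        have h2 : (j : ℕ) = (j1 : ℕ) := by rw [hj', hEl]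
        have hi2 := i2.isLt
        have hj1 := j1.isLt
        rw [if_pos (by omega : m ≤ (i:ℕ) ∨ m ≤ (j:ℕ)), if_neg (by omega)]
      · have h1 : (i : ℕ) = m + (i2 : ℕ) := by rw [hi', hEr]
        have h2 : (j : ℕ) = m + (j2 : ℕ) := by rw [hj', hEr]
        rw [if_pos (by omega : m ≤ (i:ℕ) ∨ m ≤ (j:ℕ))]
        show _ = Jmat s i2 j2
        unfold Jmat
        simp only [Matrix.of_apply]
        by_cases hc : (i2:ℕ) + (j2:ℕ) + 1 = s
        · rw [if_pos hc, if_pos (by omega)]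
        · rw [if_neg hc, if_neg (by omega)]
    rw [hM'eq, Matrix.det_submatrix_equiv_self, Matrix.det_fromBlocks_zero₁₂]
    unfold D
    ring
  rw [step1, step2]

theorem stmt11 (k n : ℕ) (hk : 2 ≤ k) (h1 : 2 ^ k ≤ n) (h2 : n ≤ 2 ^ (k + 1) - 3) :
    T n = T (2 ^ (k + 1) - 3 - n) := by
  have h2k : (2:ℕ) ^ (k+1) = 2 * 2 ^ k := by ring
  have hk4 : (4:ℕ) ≤ 2 ^ k := by
    calc (4:ℕ) = 2 ^ 2 := by norm_num
    _ ≤ 2 ^ k := Nat.pow_le_pow_right (by norm_num) hk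
  obtain ⟨m, hm⟩ : ∃ m, n + m + 1 = 2 ^ (k + 1) := ⟨2 ^ (k+1) - 1 - n, by omega⟩
  have hm2 : 2 ≤ m := by omega
  obtain ⟨s, hs⟩ : ∃ s, m + s = n := ⟨n - m, by omega⟩
  have e1 : D n = (Jmat s).det * D m := Dcore h1 hm hs
  have e2 : D (n + 2) = (Jmat (s + 4)).det * D (m - 2) :=
    Dcore (k := k) (by omega) (by omega) (by omega)
  have hgoal : 2 ^ (k + 1) - 3 - n = m - 2 := by omega
  rw [hgoal]
  unfold T
  rw [e1, e2, detJ_four, show m - 2 + 2 = m by omega]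
  calc (Jmat s).det * D m * ((Jmat s).det * D (m - 2))
      = ((Jmat s).det * (Jmat s).det) * (D (m - 2) * D m) := by ring
    _ = D (m - 2) * D m := by rw [detJ_sq, one_mul]
end

section
/- Let 2^K < m ≤ 2^{K+1} with K ≥ 0. Then det(a_{i+j+m})_{i,j=0}^{n-1} ∈ {1, -1} if n ≡ 0 (mod 2^{K+1}) or n ≡ -m (mod 2^{K+1}), and det(a_{i+j+m})_{i,j=0}^{n-1} = 0 otherwise. -/
noncomputable def dShift (n m : ℕ) : ℤ :=
  Matrix.det (Matrix.of fun i j : Fin n => catMod2 ((i : ℕ) + j + m))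

open Equiv

theorem Matrix.det_eq_zero_of_forall_exists_eq_zero {ι R : Type*} [Fintype ι] [DecidableEq ι]
    [CommRing R] (M : Matrix ι ι R) (h : ∀ σ : Perm ι, ∃ i, M (σ i) i = 0) : M.det = 0 := by
  rw [det_apply]
  refine Finset.sum_eq_zero fun σ _ => ?_
  obtain ⟨i, hi⟩ := h σ
  exact smul_eq_zero_of_right _ (Finset.prod_eq_zero (Finset.mem_univ i) hi)

theorem Matrix.det_eq_sign_smul_prod_of_forall_ne {ι R : Type*} [Fintype ι] [DecidableEq ι]
    [CommRing R] (M : Matrix ι ι R) (σ₀ : Perm ι) (h : ∀ σ, σ ≠ σ₀ → ∃ i, M (σ i) i = 0) :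
    M.det = Perm.sign σ₀ • ∏ i, M (σ₀ i) i := by
  rw [det_apply]
  refine Finset.sum_eq_single σ₀ (fun σ _ hσ => ?_) (fun h₀ => absurd (Finset.mem_univ σ₀) h₀)
  obtain ⟨i, hi⟩ := h σ hσ
  exact smul_eq_zero_of_right _ (Finset.prod_eq_zero (Finset.mem_univ i) hi)

lemma Equiv.Perm.inv_apply_lt_iff {N n : ℕ} {σ : Perm (Fin N)}
    (h : ∀ i, (σ i : ℕ) < n ↔ (i : ℕ) < n) (i : Fin N) :
    ((σ⁻¹ i : Fin N) : ℕ) < n ↔ (i : ℕ) < n := by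
  simpa using (h (σ⁻¹ i)).symm

lemma Nat.eq_of_two_pow_lt_two_mul {a b : ℕ} (hab : 2 ^ a < 2 * 2 ^ b) (hba : 2 ^ b < 2 * 2 ^ a) :
    a = b := by
  rw [← pow_succ', Nat.pow_lt_pow_iff_right (by norm_num)] at hab hba
  omega

lemma Nat.two_pow_succ_dvd_of_lt {K l : ℕ} (h : 2 ^ K < 2 ^ l) : 2 ^ (K + 1) ∣ 2 ^ l :=
  Nat.pow_dvd_pow 2 ((Nat.pow_lt_pow_iff_right (by norm_num)).mp h)

lemma Nat.exists_two_pow_mem_Ioc {q : ℕ} (hq : q ≠ 0) : ∃ j, q < 2 ^ j ∧ 2 ^ j ≤ 2 * q := by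
  refine ⟨Nat.log 2 q + 1, Nat.lt_pow_succ_log_self (by norm_num) q, ?_⟩
  rw [pow_succ]
  have := Nat.pow_log_le_self 2 hq
  omega

lemma Nat.dvd_or_dvd_add_iff_of_dvd {A a b m : ℕ} (h : A ∣ a + b + m) :
    (A ∣ a ∨ A ∣ a + m) ↔ (A ∣ b ∨ A ∣ b + m) := by
  have split : ∀ x y, A ∣ x + y → (A ∣ x ↔ A ∣ y) := fun x y hxy =>
    ⟨fun hx => (Nat.dvd_add_right hx).mp hxy, fun hy => (Nat.dvd_add_left hy).mp hxy⟩
  rw [split a (b + m) (by rwa [← add_assoc]), split (a + m) b (by rwa [add_right_comm]), or_comm]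

lemma exists_two_pow_mem_Ico {K m n : ℕ} (hm0 : 0 < m) (hm : m ≤ 2 ^ (K + 1)) (hn : n ≠ 0)
    (hc : 2 ^ (K + 1) ∣ n ∨ 2 ^ (K + 1) ∣ n + m) : ∃ l, n + m ≤ 2 ^ l ∧ 2 ^ l < 2 * n + m := by
  set A := 2 ^ (K + 1)
  have key : ∀ q, q ≠ 0 → ∃ l, A * (q + 1) ≤ 2 ^ l ∧ 2 ^ l ≤ 2 * (A * q) := fun q hq => by
    obtain ⟨j, hqj, hjq⟩ := Nat.exists_two_pow_mem_Ioc hq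
    refine ⟨K + 1 + j, ?_, ?_⟩ <;> rw [pow_add]
    · exact Nat.mul_le_mul_left A hqj
    · rw [mul_left_comm]
      exact Nat.mul_le_mul_left A hjq
  rcases hc with ⟨q, hq⟩ | ⟨q, hq⟩
  · obtain ⟨l, hl⟩ := key q (by rintro rfl; omega)
    exact ⟨l, by rw [mul_add_one] at hl; omega⟩
  · obtain ⟨_ | r, rfl⟩ : ∃ r, q = r + 1 := Nat.exists_eq_succ_of_ne_zero (by rintro rfl; omega)
    · exact ⟨K + 1, by omega⟩
    · obtain ⟨l, hl⟩ := key (r + 1) (by omega)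
      exact ⟨l, by rw [mul_add_one] at hl hq; omega⟩

def IsPowTwoMatching {N : ℕ} (m : ℕ) (σ : Perm (Fin N)) : Prop :=
  ∀ i, ∃ k, (σ i : ℕ) + i + m + 1 = 2 ^ k

namespace IsPowTwoMatching

variable {m N n n' l : ℕ} {σ τ : Perm (Fin N)}

lemma inv (hσ : IsPowTwoMatching m σ) : IsPowTwoMatching m σ⁻¹ := fun i => by
  obtain ⟨k, hk⟩ := hσ (σ⁻¹ i)
  rw [show σ (σ⁻¹ i) = i by simp] at hk
  exact ⟨k, by omega⟩

lemma add_eq_of_two_pow_le (hσ : IsPowTwoMatching m σ) (hσn : ∀ i, (σ i : ℕ) < n ↔ (i : ℕ) < n)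
    (hP : n' + n + m = 2 ^ l) {i : Fin N} (hi : (i : ℕ) < n) (hiP : 2 ^ l < 2 * (i + m + 1)) :
    (σ i : ℕ) + i + m + 1 = 2 ^ l := by
  obtain ⟨k, hk⟩ := hσ i
  have := (hσn i).mpr hi
  rw [hk, Nat.eq_of_two_pow_lt_two_mul (a := k) (b := l) (by omega) (by omega)]

section Block

variable (hσ : IsPowTwoMatching m σ) (hσn : ∀ i, (σ i : ℕ) < n ↔ (i : ℕ) < n) (hnN : n ≤ N)
include hσ hσn hnN

lemma exists_add_eq_two_pow (hn : n ≠ 0) : ∃ n' l, n' < n ∧ n' + n + m = 2 ^ l := by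
  obtain ⟨i, hi⟩ : ∃ i : Fin N, (i : ℕ) = n - 1 := ⟨⟨n - 1, by omega⟩, rfl⟩
  obtain ⟨l, hl⟩ := hσ i
  have := (hσn i).mpr (by omega)
  exact ⟨σ i, l, this, by omega⟩

lemma add_eq_of_le (hP : n' + n + m = 2 ^ l) {i : Fin N} (hi : (i : ℕ) < n) (hni : n' ≤ i) :
    (σ i : ℕ) + i + m + 1 = 2 ^ l := by
  by_cases hiP : 2 ^ l < 2 * (i + m + 1)
  · exact hσ.add_eq_of_two_pow_le hσn hP hi hiP
  -- otherwise the partner `j` of `i` satisfies `2 ^ l < 2 (j + m + 1)`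
  obtain ⟨j, hj⟩ : ∃ j : Fin N, (j : ℕ) = 2 ^ l - m - 1 - i :=
    ⟨⟨2 ^ l - m - 1 - i, by omega⟩, rfl⟩
  have hjP := hσ.inv.add_eq_of_two_pow_le (Perm.inv_apply_lt_iff hσn) hP (i := j) (by omega)
    (by omega)
  have hσj : σ⁻¹ j = i := Fin.ext (by omega)
  rw [← hσj, show σ (σ⁻¹ j) = j by simp]
  omega

lemma lt_of_lt (hP : n' + n + m = 2 ^ l) (hn' : n' ≤ n) {i : Fin N} (hi : (i : ℕ) < n') :
    (σ i : ℕ) < n' := by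
  by_contra! h
  have hσi : (σ i : ℕ) < n := (hσn i).mpr (by omega)
  have := hσ.inv.add_eq_of_le (Perm.inv_apply_lt_iff hσn) hnN hP hσi h
  rw [show σ⁻¹ (σ i) = i by simp] at this
  omega

lemma apply_lt_iff_of_add_eq (hP : n' + n + m = 2 ^ l) (hn' : n' ≤ n) (i : Fin N) :
    (σ i : ℕ) < n' ↔ (i : ℕ) < n' := by
  refine ⟨fun h => ?_, hσ.lt_of_lt hσn hnN hP hn'⟩
  simpa using hσ.inv.lt_of_lt (Perm.inv_apply_lt_iff hσn) hnN hP hn' h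

end Block

lemma apply_eq_apply_of_lt (hσ : IsPowTwoMatching m σ) (hτ : IsPowTwoMatching m τ)
    (hσn : ∀ i, (σ i : ℕ) < n ↔ (i : ℕ) < n) (hτn : ∀ i, (τ i : ℕ) < n ↔ (i : ℕ) < n)
    (hnN : n ≤ N) {i : Fin N} (hi : (i : ℕ) < n) : σ i = τ i := by
  induction n using Nat.strong_induction_on with
  | _ n ih =>
  obtain ⟨n', l, hn', hP⟩ := hσ.exists_add_eq_two_pow hσn hnN (by omega)
  by_cases hin' : (i : ℕ) < n'
  · exact ih n' hn' (hσ.apply_lt_iff_of_add_eq hσn hnN hP hn'.le)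
      (hτ.apply_lt_iff_of_add_eq hτn hnN hP hn'.le) (by omega) hin'
  · have := hσ.add_eq_of_le hσn hnN hP hi (by omega)
    have := hτ.add_eq_of_le hτn hnN hP hi (by omega)
    exact Fin.ext (by omega)

lemma dvd_or_dvd_add {K : ℕ} (hK : 2 ^ K < m) (hσ : IsPowTwoMatching m σ)
    (hσn : ∀ i, (σ i : ℕ) < n ↔ (i : ℕ) < n) (hnN : n ≤ N) :
    2 ^ (K + 1) ∣ n ∨ 2 ^ (K + 1) ∣ n + m := by
  induction n using Nat.strong_induction_on with
  | _ n ih =>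
  obtain rfl | hn := eq_or_ne n 0
  · exact Or.inl (dvd_zero _)
  obtain ⟨n', l, hn', hP⟩ := hσ.exists_add_eq_two_pow hσn hnN hn
  have hdvd : 2 ^ (K + 1) ∣ n' + n + m := hP ▸ Nat.two_pow_succ_dvd_of_lt (by omega)
  exact (Nat.dvd_or_dvd_add_iff_of_dvd hdvd).mp
    (ih n' hn' (hσ.apply_lt_iff_of_add_eq hσn hnN hP hn'.le) (by omega))

end IsPowTwoMatching

def Equiv.Perm.appendRev {n' : ℕ} (σ : Perm (Fin n')) (r : ℕ) : Perm (Fin (n' + r)) :=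
  finSumFinEquiv.permCongr (σ.sumCongr Fin.revPerm)

lemma IsPowTwoMatching.appendRev {m n' r l : ℕ} {σ : Perm (Fin n')} (hσ : IsPowTwoMatching m σ)
    (hP : n' + (n' + r) + m = 2 ^ l) : IsPowTwoMatching m (σ.appendRev r) := by
  intro i
  induction i using Fin.addCases with
  | left a =>
    simpa [Perm.appendRev, Equiv.permCongr_apply] using hσ a
  | right b =>
    refine ⟨l, ?_⟩
    simp only [Perm.appendRev, permCongr_apply, finSumFinEquiv_symm_apply_natAdd, sumCongr_apply,
      Sum.map_inr, Fin.revPerm_apply, finSumFinEquiv_apply_right, Fin.val_natAdd, Fin.val_rev]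
    omega

lemma exists_isPowTwoMatching {K m : ℕ} (hK : 2 ^ K < m) (hm : m ≤ 2 ^ (K + 1)) (n : ℕ)
    (hc : 2 ^ (K + 1) ∣ n ∨ 2 ^ (K + 1) ∣ n + m) : ∃ σ : Perm (Fin n), IsPowTwoMatching m σ := by
  induction n using Nat.strong_induction_on with
  | _ n ih =>
  obtain rfl | hn := eq_or_ne n 0
  · exact ⟨1, fun i => i.elim0⟩
  obtain ⟨l, hl⟩ := exists_two_pow_mem_Ico (by omega) hm hn hc
  obtain ⟨n', hP⟩ : ∃ n', n' + n + m = 2 ^ l := ⟨2 ^ l - n - m, by omega⟩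
  have hdvd : 2 ^ (K + 1) ∣ n' + n + m := hP ▸ Nat.two_pow_succ_dvd_of_lt (by omega)
  obtain ⟨σ, hσ⟩ := ih n' (by omega) ((Nat.dvd_or_dvd_add_iff_of_dvd hdvd).mpr hc)
  obtain ⟨r, rfl⟩ := Nat.exists_eq_add_of_le (show n' ≤ n by omega)
  exact ⟨σ.appendRev r, hσ.appendRev hP⟩

lemma IsPowTwoMatching.prod_catMod2_eq_one {m N : ℕ} {σ : Perm (Fin N)}
    (hσ : IsPowTwoMatching m σ) : ∏ i, catMod2 ((σ i : ℕ) + i + m) = 1 :=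
  Finset.prod_eq_one fun i _ => if_pos (hσ i)

lemma exists_catMod2_eq_zero_of_not_isPowTwoMatching {m N : ℕ} {σ : Perm (Fin N)}
    (hσ : ¬IsPowTwoMatching m σ) : ∃ i, catMod2 ((σ i : ℕ) + i + m) = 0 := by
  obtain ⟨i, hi⟩ := not_forall.mp hσ
  exact ⟨i, if_neg hi⟩

theorem stmt12 (K m n : ℕ) (h1 : 2 ^ K < m) (h2 : m ≤ 2 ^ (K + 1)) :
    (n % 2 ^ (K + 1) = 0 ∨ (n + m) % 2 ^ (K + 1) = 0 →
      dShift n m = 1 ∨ dShift n m = -1) ∧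
    (¬(n % 2 ^ (K + 1) = 0 ∨ (n + m) % 2 ^ (K + 1) = 0) → dShift n m = 0) := by
  simp only [← Nat.dvd_iff_mod_eq_zero]
  have hfull : ∀ (σ : Perm (Fin n)) i, (σ i : ℕ) < n ↔ (i : ℕ) < n :=
    fun σ i => iff_of_true (σ i).2 i.2
  refine ⟨fun hc => ?_, fun hc => ?_⟩
  · obtain ⟨σ₀, hσ₀⟩ := exists_isPowTwoMatching h1 h2 n hc
    have hdet : dShift n m = Perm.sign σ₀ • (1 : ℤ) := by
      rw [dShift, Matrix.det_eq_sign_smul_prod_of_forall_ne _ σ₀ fun σ hσ => ?_]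
      · exact congrArg _ hσ₀.prod_catMod2_eq_one
      refine exists_catMod2_eq_zero_of_not_isPowTwoMatching fun h => hσ (Perm.ext fun i => ?_)
      exact h.apply_eq_apply_of_lt hσ₀ (hfull σ) (hfull σ₀) le_rfl i.2
    rcases Int.units_eq_one_or (Perm.sign σ₀) with h | h <;> simp [hdet, h]
  · refine Matrix.det_eq_zero_of_forall_exists_eq_zero _ fun σ =>
      exists_catMod2_eq_zero_of_not_isPowTwoMatching fun hσ => hc ?_
    exact hσ.dvd_or_dvd_add h1 (hfull σ) le_rfl
end

section
/- Let 2^K < m ≤ 2^{K+1}. The product ∏_{j=1}^{m-1} ∏_{i=1}^{j} (2n+i+j)/(i+j) is an odd integer if and only if n ≡ 0 (mod 2^{K+1}) or n ≡ -m (mod 2^{K+1}); otherwise it is an even integer. -/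
/-!
With `L = m - 1` and `P(n) = ∏_{1 ≤ i ≤ j ≤ L} (2n + i + j)`, the product is `P(n) / P(0)`, and
the exponent of a prime `p` in `P(n)` is `∑_{e ≥ 1} N(p^e, n)`, where `N(q, n)` counts the pairs
with `q ∣ 2n + i + j`. Everything reduces to comparing `N(q, n)` with `N(q, 0)`.

`N(q, 0) ≤ N(q, n)` always. Row `j + q` of the triangle holds exactly one more multiple of `q`
than row `j`, so enlarging the side by `q` adds `N` of a side-`q` triangle, which does not depend
on `n`, plus a constant. This reduces to sides at most `q`, where the pairs are sorted by
`i + j ∈ {r, r + q, r + 2q}` with `r ≡ -2n (mod q)`, and the explicit count is smallest for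
`r = 0` (for even `q` only even `r` occur).

For `p = 2` the quotient is odd iff `N(2^e, n) = N(2^e, 0)` for all `e`. If `2^(K+1)` divides `n`
(resp. `n + m`), the translation by `2n` (resp. the reflection `(j, i) ↦ (m - i, m - j)`)
preserves divisibility by `2^e` for `e ≤ K + 2`, and for larger `e` both counts vanish.
Otherwise, writing `n ≡ a (mod 2^(K+1))`, the pair sum `2^(K+1) - 2a` (if `a + m < 2^(K+1)`) or
`2^(K+2) - 2a` makes `N(2^e, n) > N(2^e, 0)` for `e = K + 1` or `e = K + 2`.
-/

open Finset

def triangle (L : ℕ) : Finset (Σ _ : ℕ, ℕ) := (Icc 1 L).sigma fun j => Icc 1 j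

lemma mem_triangle {L : ℕ} {x : Σ _ : ℕ, ℕ} :
    x ∈ triangle L ↔ 1 ≤ x.2 ∧ x.2 ≤ x.1 ∧ x.1 ≤ L := by
  simp only [triangle, mem_sigma, mem_Icc]
  omega

def sumCount (L s : ℕ) : ℕ := #{x ∈ triangle L | x.2 + x.1 = s}

def divCount (L q n : ℕ) : ℕ := #{x ∈ triangle L | q ∣ 2 * n + x.2 + x.1}

lemma sumCount_eq (L s : ℕ) : sumCount L s = s / 2 + 1 - max 1 (s - L) := by
  rw [sumCount, ← Nat.card_Icc]
  refine card_nbij' (·.2) (fun i => ⟨s - i, i⟩) ?_ ?_ ?_ ?_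
  · intro x hx
    simp only [mem_coe, mem_filter, mem_triangle, mem_Icc] at hx ⊢
    omega
  · intro i hi
    simp only [mem_coe, mem_filter, mem_triangle, mem_Icc] at hi ⊢
    omega
  · rintro ⟨j, i⟩ hx
    simp only [mem_coe, mem_filter, mem_triangle] at hx
    simp [← hx.2]
  · intro i _
    rfl

lemma sumCount_eq_zero {L s : ℕ} (h : s = 0 ∨ 2 * L < s) : sumCount L s = 0 := by
  rw [sumCount_eq]
  omega

lemma exists_dvd_two_mul_add {q : ℕ} (hq : 0 < q) (n : ℕ) :
    ∃ r < q, q ∣ 2 * n + r ∧ (2 ∣ q → 2 ∣ r) := by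
  obtain h | h := eq_or_ne (2 * n % q) 0
  · exact ⟨0, hq, Nat.dvd_of_mod_eq_zero h, fun _ => dvd_zero 2⟩
  · have hdiv := Nat.div_add_mod (2 * n) q
    have hlt := Nat.mod_lt (2 * n) hq
    refine ⟨q - 2 * n % q, by omega, ⟨2 * n / q + 1, by rw [mul_add]; omega⟩, fun h2 => ?_⟩
    have := (Nat.dvd_mod_iff h2).2 (dvd_mul_right 2 n)
    omega

lemma divCount_eq_sum_sumCount {L q n r : ℕ} (hL : L ≤ q) (hr : r < q) (hdvd : q ∣ 2 * n + r) :
    divCount L q n = ∑ k ∈ range 3, sumCount L (r + k * q) := by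
  have hq : 0 < q := by omega
  have hmod : ∀ s, q ∣ 2 * n + s ↔ s % q = r := fun s => by
    have h0 : 2 * n + r ≡ 0 [MOD q] := Nat.modEq_zero_iff_dvd.2 hdvd
    rw [← Nat.modEq_zero_iff_dvd, ← Nat.mod_eq_of_lt hr]
    exact ⟨fun h => Nat.ModEq.add_left_cancel' _ (h.trans h0.symm),
      fun (h : s ≡ r [MOD q]) => (h.add_left _).trans h0⟩
  have hres : divCount L q n = #{x ∈ triangle L | (x.2 + x.1) % q = r} := by
    simp only [divCount, add_assoc, hmod]
  rw [hres, card_eq_sum_card_fiberwise (f := fun x => (x.2 + x.1) / q) (t := range 3)]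
  · refine sum_congr rfl fun k _ => ?_
    rw [filter_filter, sumCount]
    congr 1
    refine filter_congr fun x _ => ?_
    rw [and_comm, Nat.div_mod_unique hq]
    constructor
    · rintro ⟨h, -⟩
      rw [← h, mul_comm]
    · intro h
      exact ⟨by rw [h, mul_comm], hr⟩
  · intro x hx
    simp only [mem_coe, mem_filter, mem_triangle, mem_range] at hx ⊢
    rw [Nat.div_lt_iff_lt_mul hq]
    omega

lemma divCount_zero_le_of_le {L q : ℕ} (hq : 0 < q) (hL : L ≤ q) (n : ℕ) :
    divCount L q 0 ≤ divCount L q n := by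
  obtain ⟨r, hr, hdvd, hpar⟩ := exists_dvd_two_mul_add hq n
  rw [divCount_eq_sum_sumCount (n := 0) hL hq (by simp), divCount_eq_sum_sumCount hL hr hdvd]
  simp only [sum_range_succ, sum_range_zero, zero_add, zero_mul, one_mul]
  obtain rfl | hr0 := Nat.eq_zero_or_pos r
  · simp
  rw [sumCount_eq_zero (.inl rfl), sumCount_eq_zero (s := r + 2 * q) (.inr (by omega))]
  simp only [sumCount_eq]
  omega

lemma divCount_self {q : ℕ} (hq : 0 < q) (n : ℕ) : divCount q q n = divCount q q 0 := by
  obtain ⟨r, hr, hdvd, hpar⟩ := exists_dvd_two_mul_add hq n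
  rw [divCount_eq_sum_sumCount (n := 0) le_rfl hq (by simp),
    divCount_eq_sum_sumCount le_rfl hr hdvd]
  simp only [sum_range_succ, sum_range_zero, zero_add, zero_mul, one_mul, sumCount_eq]
  omega

lemma card_filter_dvd_Ioc (q : ℕ) {a b : ℕ} (hab : a ≤ b) :
    #{x ∈ Ioc a b | q ∣ x} = b / q - a / q := by
  have h := Nat.Ioc_filter_dvd_card_eq_div b q
  rw [← Ioc_union_Ioc_eq_Ioc (Nat.zero_le a) hab, filter_union,
    card_union_of_disjoint (disjoint_filter_filter (Ioc_disjoint_Ioc_of_le le_rfl)),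
    Nat.Ioc_filter_dvd_card_eq_div] at h
  omega

lemma card_filter_dvd_row (q c j : ℕ) :
    #{i ∈ Icc 1 j | q ∣ c + i + j} = (c + 2 * j) / q - (c + j) / q := by
  rw [← card_filter_dvd_Ioc q (by omega : c + j ≤ c + 2 * j)]
  refine card_nbij' (fun i => c + i + j) (fun x => x - c - j) ?_ ?_ ?_ ?_
  · intro i hi
    simp only [mem_coe, mem_filter, mem_Icc, mem_Ioc] at hi ⊢
    exact ⟨by omega, hi.2⟩
  · intro x hx
    simp only [mem_coe, mem_filter, mem_Icc, mem_Ioc] at hx ⊢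
    refine ⟨by omega, ?_⟩
    rw [show c + (x - c - j) + j = x by omega]
    exact hx.2
  · intro i _
    dsimp only
    omega
  · intro x hx
    simp only [mem_coe, mem_filter, mem_Ioc] at hx
    dsimp only
    omega

lemma divCount_succ (L q n : ℕ) :
    divCount (L + 1) q n =
      divCount L q n + ((2 * n + 2 * (L + 1)) / q - (2 * n + (L + 1)) / q) := by
  simp only [divCount, triangle, filter_sigma, card_sigma]
  rw [sum_Icc_succ_top (by omega), card_filter_dvd_row]

lemma divCount_add_self {q : ℕ} (hq : 0 < q) (L n : ℕ) :
    divCount (q + L) q n = divCount q q n + divCount L q n + L := by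
  induction L with
  | zero => simp [divCount, triangle]
  | succ L ih =>
    have h2 : (2 * n + 2 * (q + L + 1)) / q = (2 * n + 2 * (L + 1)) / q + 2 := by
      rw [show 2 * n + 2 * (q + L + 1) = 2 * n + 2 * (L + 1) + 2 * q by ring,
        Nat.add_mul_div_right _ _ hq]
    have h1 : (2 * n + (q + L + 1)) / q = (2 * n + (L + 1)) / q + 1 := by
      rw [show 2 * n + (q + L + 1) = 2 * n + (L + 1) + 1 * q by ring,
        Nat.add_mul_div_right _ _ hq]
    have hmono : (2 * n + (L + 1)) / q ≤ (2 * n + 2 * (L + 1)) / q :=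
      Nat.div_le_div_right (by omega)
    rw [← add_assoc, divCount_succ, divCount_succ, ih, h1, h2]
    omega

lemma divCount_zero_le {q : ℕ} (hq : 0 < q) (L n : ℕ) : divCount L q 0 ≤ divCount L q n := by
  induction L using Nat.strong_induction_on with
  | _ L ih =>
    rcases le_or_gt L q with hL | hL
    · exact divCount_zero_le_of_le hq hL n
    · obtain ⟨L, rfl⟩ : ∃ L', L = q + L' := ⟨L - q, by omega⟩
      rw [divCount_add_self hq, divCount_add_self hq, divCount_self hq n]
      have := ih L (by omega)
      omega

lemma divCount_eq_zero_of_lt {L q n : ℕ} (h : 2 * n + 2 * L < q) : divCount L q n = 0 := by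
  rw [divCount, card_eq_zero, filter_eq_empty_iff]
  intro x hx hdvd
  rw [mem_triangle] at hx
  have := Nat.le_of_dvd (by omega) hdvd
  omega

lemma divCount_le_of_dvd {q q' : ℕ} (h : q ∣ q') (L n : ℕ) : divCount L q' n ≤ divCount L q n :=
  card_le_card (monotone_filter_right _ fun _ _ => h.trans)

lemma divCount_eq_of_dvd_two_mul {L q n : ℕ} (h : q ∣ 2 * n) :
    divCount L q n = divCount L q 0 := by
  simp only [divCount, add_assoc, Nat.dvd_add_right h, mul_zero, zero_add]

lemma divCount_reflect {L q n : ℕ} (h : q ∣ 2 * n + 2 * (L + 1)) :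
    divCount L q n = divCount L q 0 := by
  have key : ∀ s ≤ 2 * (L + 1), q ∣ 2 * n + s ↔ q ∣ 2 * (L + 1) - s := fun s hs => by
    have h' : q ∣ (2 * n + s) + (2 * (L + 1) - s) := by
      rwa [show 2 * n + s + (2 * (L + 1) - s) = 2 * n + 2 * (L + 1) by omega]
    exact ⟨fun hs' => (Nat.dvd_add_right hs').1 h', fun hs' => (Nat.dvd_add_left hs').1 h'⟩
  refine card_nbij' (fun x => ⟨L + 1 - x.2, L + 1 - x.1⟩) (fun x => ⟨L + 1 - x.2, L + 1 - x.1⟩)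
    ?_ ?_ ?_ ?_
  · rintro ⟨j, i⟩ hx
    simp only [mem_coe, mem_filter, mem_triangle] at hx ⊢
    refine ⟨by omega, ?_⟩
    rw [show 2 * 0 + (L + 1 - j) + (L + 1 - i) = 2 * (L + 1) - (i + j) by omega,
      ← key _ (by omega), ← add_assoc]
    exact hx.2
  · rintro ⟨j, i⟩ hx
    simp only [mem_coe, mem_filter, mem_triangle] at hx ⊢
    refine ⟨by omega, ?_⟩
    rw [add_assoc, key _ (by omega),
      show 2 * (L + 1) - (L + 1 - j + (L + 1 - i)) = i + j by omega]
    simpa using hx.2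
  all_goals
    rintro ⟨j, i⟩ hx
    simp only [mem_coe, mem_filter, mem_triangle] at hx
    dsimp only
    rw [show L + 1 - (L + 1 - j) = j by omega, show L + 1 - (L + 1 - i) = i by omega]

lemma divCount_eq_of_dvd_or_dvd {L q n d : ℕ} (h : q ∣ n ∨ q ∣ n + (L + 1)) (hd : d ∣ 2 * q) :
    divCount L d n = divCount L d 0 := by
  rcases h with h | h
  · exact divCount_eq_of_dvd_two_mul (hd.trans (mul_dvd_mul_left 2 h))
  · exact divCount_reflect (by rw [← mul_add]; exact hd.trans (mul_dvd_mul_left 2 h))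

lemma divCount_two_pow_eq {k L n : ℕ} (hL : L < 2 ^ k) (h : 2 ^ k ∣ n ∨ 2 ^ k ∣ n + (L + 1))
    (e : ℕ) : divCount L (2 ^ e) n = divCount L (2 ^ e) 0 := by
  have hk : 2 * 2 ^ k = 2 ^ (k + 1) := (pow_succ' 2 k).symm
  rcases le_or_gt e (k + 1) with he | he
  · exact divCount_eq_of_dvd_or_dvd h (hk ▸ pow_dvd_pow 2 he)
  · have hdvd : 2 ^ (k + 1) ∣ 2 ^ e := pow_dvd_pow 2 he.le
    have h0 : divCount L (2 ^ (k + 1)) 0 = 0 := divCount_eq_zero_of_lt (by omega)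
    have hn : divCount L (2 ^ (k + 1)) n = 0 :=
      (divCount_eq_of_dvd_or_dvd h hk.symm.dvd).trans h0
    have := divCount_le_of_dvd hdvd L n
    have := divCount_le_of_dvd hdvd L 0
    omega

lemma divCount_lt_of_not_dvd {q L n : ℕ} (h1 : q < 2 * (L + 1)) (h2 : L + 1 ≤ q) (hn : ¬q ∣ n)
    (hnL : ¬q ∣ n + (L + 1)) :
    divCount L q 0 < divCount L q n ∨ divCount L (2 * q) 0 < divCount L (2 * q) n := by
  have hq : 0 < q := by omega
  obtain ⟨c, a, ha, haq, rfl⟩ : ∃ c a, 0 < a ∧ a < q ∧ n = q * c + a :=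
    ⟨n / q, n % q, Nat.pos_of_ne_zero (mt Nat.dvd_of_mod_eq_zero hn), Nat.mod_lt n hq,
      (Nat.div_add_mod n q).symm⟩
  have haL : a + (L + 1) ≠ q := fun h => hnL ⟨c + 1, by rw [mul_add]; omega⟩
  rcases lt_or_gt_of_ne haL with hlow | hhigh
  · left
    rw [divCount_eq_sum_sumCount (n := 0) (by omega) hq (by simp),
      divCount_eq_sum_sumCount (r := q - 2 * a) (by omega) (by omega)
        ⟨2 * c + 1, by rw [show q * (2 * c + 1) = 2 * (q * c) + q by ring]; omega⟩]
    simp only [sum_range_succ, sum_range_zero, zero_add, zero_mul, one_mul]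
    rw [sumCount_eq_zero (.inl rfl), sumCount_eq_zero (s := 2 * q) (.inr (by omega)),
      sumCount_eq_zero (s := q - 2 * a + q) (.inr (by omega)),
      sumCount_eq_zero (s := q - 2 * a + 2 * q) (.inr (by omega))]
    simp only [sumCount_eq]
    omega
  · right
    rw [divCount_eq_sum_sumCount (n := 0) (by omega) (by omega : 0 < 2 * q) (by simp),
      divCount_eq_sum_sumCount (r := 2 * q - 2 * a) (by omega) (by omega)
        ⟨c + 1, by rw [show 2 * q * (c + 1) = 2 * (q * c) + 2 * q by ring]; omega⟩]
    simp only [sum_range_succ, sum_range_zero, zero_add, zero_mul, one_mul]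
    rw [sumCount_eq_zero (.inl rfl), sumCount_eq_zero (s := 2 * q) (.inr (by omega)),
      sumCount_eq_zero (s := 2 * (2 * q)) (.inr (by omega))]
    simp only [sumCount_eq]
    omega

lemma factorization_prod_eq_sum_card {ι : Type*} {s : Finset ι} {f : ι → ℕ} {p b : ℕ}
    (hp : p.Prime) (hf : ∀ x ∈ s, f x ≠ 0) (hb : ∀ x ∈ s, f x ≤ p ^ b) :
    (∏ x ∈ s, f x).factorization p = ∑ e ∈ Icc 1 b, #{x ∈ s | p ^ e ∣ f x} := by
  rw [Nat.factorization_prod hf, Finsupp.finsetSum_apply]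
  simp_rw [card_filter]
  rw [sum_comm]
  refine sum_congr rfl fun x hx => ?_
  rw [Nat.factorization_eq_card_pow_dvd _ hp, Nat.Ico_filter_pow_dvd_eq hp (hf x hx) (hb x hx),
    card_filter]

lemma odd_div_iff_factorization_two_le {a b : ℕ} (ha : a ≠ 0) (hb : b ∣ a) :
    Odd (a / b) ↔ a.factorization 2 ≤ b.factorization 2 := by
  have hab : a / b ≠ 0 := (Nat.div_ne_zero_iff_of_dvd hb).2 ⟨ha, ne_zero_of_dvd_ne_zero ha hb⟩
  rw [← Nat.not_even_iff_odd, even_iff_two_dvd, ← Nat.sub_eq_zero_iff_le, ← Finsupp.tsub_apply,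
    ← Nat.factorization_div hb, Nat.factorization_eq_zero_iff]
  simp [Nat.prime_two, hab]

def triangleProd (L n : ℕ) : ℕ := ∏ x ∈ triangle L, (2 * n + x.2 + x.1)

lemma triangleProd_ne_zero (L n : ℕ) : triangleProd L n ≠ 0 :=
  prod_ne_zero_iff.2 fun x hx => by rw [mem_triangle] at hx; omega

lemma factorization_triangleProd {L n p b : ℕ} (hp : p.Prime) (hb : 2 * n + 2 * L ≤ p ^ b) :
    (triangleProd L n).factorization p = ∑ e ∈ Icc 1 b, divCount L (p ^ e) n :=
  factorization_prod_eq_sum_card hp (fun x hx => by rw [mem_triangle] at hx; omega)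
    (fun x hx => by rw [mem_triangle] at hx; omega)

lemma triangleProd_zero_dvd (L n : ℕ) : triangleProd L 0 ∣ triangleProd L n := by
  rw [← Nat.factorization_le_iff_dvd (triangleProd_ne_zero L 0) (triangleProd_ne_zero L n)]
  intro p
  by_cases hp : p.Prime
  · have hb : 2 * n + 2 * L ≤ p ^ (2 * n + 2 * L) := (Nat.lt_pow_self hp.one_lt).le
    rw [factorization_triangleProd hp hb,
      factorization_triangleProd (b := 2 * n + 2 * L) hp (by omega)]
    exact sum_le_sum fun e _ => divCount_zero_le (pow_pos hp.pos e) L n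
  · simp [Nat.factorization_eq_zero_of_not_prime _ hp]

lemma odd_triangleProd_div_iff {L n b : ℕ} (hb : 2 * n + 2 * L ≤ 2 ^ b) :
    Odd (triangleProd L n / triangleProd L 0) ↔
      ∀ e ∈ Icc 1 b, divCount L (2 ^ e) n = divCount L (2 ^ e) 0 := by
  have hle : ∀ e ∈ Icc 1 b, divCount L (2 ^ e) 0 ≤ divCount L (2 ^ e) n :=
    fun e _ => divCount_zero_le (by positivity) L n
  rw [odd_div_iff_factorization_two_le (triangleProd_ne_zero L n) (triangleProd_zero_dvd L n),
    factorization_triangleProd Nat.prime_two hb,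
    factorization_triangleProd (b := b) Nat.prime_two (by omega),
    (sum_le_sum hle).ge_iff_eq, sum_eq_sum_iff_of_le hle]
  exact forall₂_congr fun _ _ => eq_comm

lemma prod_div_eq_triangleProd (L n : ℕ) :
    ∏ j ∈ Icc 1 L, ∏ i ∈ Icc 1 j, ((2 * n + i + j : ℚ) / (i + j : ℚ)) =
      (triangleProd L n : ℚ) / triangleProd L 0 := by
  rw [prod_sigma', prod_div_distrib]
  simp [triangleProd, triangle]

theorem stmt13 (K m n : ℕ) (h1 : 2 ^ K < m) (h2 : m ≤ 2 ^ (K + 1)) :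
    ∃ z : ℤ, (∏ j ∈ Finset.Icc 1 (m - 1), ∏ i ∈ Finset.Icc 1 j,
        ((2 * n + i + j : ℚ) / (i + j : ℚ))) = (z : ℚ) ∧
      (Odd z ↔ (n % 2 ^ (K + 1) = 0 ∨ (n + m) % 2 ^ (K + 1) = 0)) := by
  have hK : 2 * 2 ^ K = 2 ^ (K + 1) := (pow_succ' 2 K).symm
  have hKm : K < m := Nat.lt_two_pow_self.trans h1
  obtain ⟨L, rfl⟩ : ∃ L, m = L + 1 := ⟨m - 1, by omega⟩
  refine ⟨(triangleProd L n / triangleProd L 0 : ℕ), ?_, ?_⟩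
  · rw [Int.cast_natCast, Nat.cast_div_charZero (triangleProd_zero_dvd L n), Nat.add_sub_cancel,
      prod_div_eq_triangleProd]
  have hb : 2 * n + 2 * L ≤ 2 ^ (2 * n + 2 * L + 2) := by
    have := Nat.lt_two_pow_self (n := 2 * n + 2 * L + 2)
    omega
  rw [Int.odd_coe_nat, odd_triangleProd_div_iff hb, ← Nat.dvd_iff_mod_eq_zero,
    ← Nat.dvd_iff_mod_eq_zero]
  constructor
  · intro h
    by_contra! hc
    rcases divCount_lt_of_not_dvd (by omega) h2 hc.1 hc.2 with hlt | hlt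
    · exact hlt.ne' (h (K + 1) (mem_Icc.2 ⟨by omega, by omega⟩))
    · rw [← pow_succ'] at hlt
      exact hlt.ne' (h (K + 2) (mem_Icc.2 ⟨by omega, by omega⟩))
  · exact fun h e _ => divCount_two_pow_eq (by omega) h e
end

section
/- If 2^k - m < n < 2^k for some k (with 2^k ≥ m), then det(a_{i+j+m})_{i,j=0}^{n-1} = 0. -/
theorem stmt14 (m k n : ℕ) (hm : 2 ≤ m) (hk : m ≤ 2 ^ k)
    (h1 : 2 ^ k - m < n) (h2 : n < 2 ^ k) :
    Matrix.det (Matrix.of fun i j : Fin n => catMod2 ((i : ℕ) + j + m)) = 0 := by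
  apply Matrix.det_eq_zero_of_row_eq_zero ⟨2 ^ k - m, h1⟩
  intro j
  simp only [Matrix.of_apply, catMod2]
  rw [if_neg]
  rintro ⟨s, hs⟩
  have h3 : 2 ^ k < 2 ^ s := by omega
  have hks : k < s := (Nat.pow_lt_pow_iff_right (by norm_num)).mp h3
  have h4 : 2 ^ (k + 1) ≤ 2 ^ s := Nat.pow_le_pow_right (by norm_num) hks
  have hj : (j : ℕ) < n := j.isLt
  have : 2 ^ (k + 1) = 2 * 2 ^ k := by ring
  omega
end
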